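/- arXiv:math/9811011 — 6 statements merged into one kernel-verified Lean document; each statement's English description precedes it below -/
import Mathlib

section
/- If U is a nonempty open proper subset of a compact connected Hausdorff space K and C is a connected component of U, then the closure of C in K meets the boundary of U in K. In particular, every connected component of U has more than one point. -/
/-!
If `closure C` missed `frontier U`, it would lie in `U`, so by normality some open `W` satisfies
`closure C ⊆ W ⊆ closure W ⊆ U`. In the compact Hausdorff space `closure W` the component of `x`
lies in `C ⊆ W`, and components there are intersections of clopen sets (Šura-Bura), so some set
`V` with `x ∈ V ⊆ W` is clopen in `closure W`. Such a `V` is closed in `K`, and open in `K`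
because it is open in `W`; connectedness of `K` forces `V = K`, contradicting `U ≠ K`.
-/

open Set

theorem exists_isClopen_subset_of_connectedComponent_subset {X : Type*} [TopologicalSpace X]
    [CompactSpace X] [T2Space X] {x : X} {W : Set X} (hW : IsOpen W)
    (h : connectedComponent x ⊆ W) : ∃ V, IsClopen V ∧ x ∈ V ∧ V ⊆ W := by
  let N := { s : Set X // IsClopen s ∧ x ∈ s }
  have : Nonempty N := ⟨⟨univ, isClopen_univ, mem_univ x⟩⟩
  have hdir : Directed (· ⊇ ·) fun s : N => s.val := by
    rintro ⟨s, hs, hxs⟩ ⟨t, ht, hxt⟩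
    exact ⟨⟨s ∩ t, hs.inter ht, hxs, hxt⟩, inter_subset_left, inter_subset_right⟩
  have hW_nhds : ∀ y ∈ ⋂ s : N, s.val, W ∈ nhds y := fun y hy =>
    hW.mem_nhds (h ((connectedComponent_eq_iInter_isClopen x).symm ▸ hy))
  obtain ⟨⟨V, hV, hxV⟩, hVW⟩ :=
    exists_subset_nhds_of_compactSpace hdir (fun s => s.2.1.isClosed) hW_nhds
  exact ⟨V, hV, hxV, hVW⟩

theorem exists_isClopen_subset_of_connectedComponentIn_closure_subset {X : Type*}
    [TopologicalSpace X] [CompactSpace X] [T2Space X] {x : X} {W : Set X} (hW : IsOpen W)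
    (hx : x ∈ W) (h : connectedComponentIn (closure W) x ⊆ W) :
    ∃ V, IsClopen V ∧ x ∈ V ∧ V ⊆ W := by
  have : CompactSpace (closure W) := isCompact_iff_compactSpace.mp isClosed_closure.isCompact
  let x' : closure W := ⟨x, subset_closure hx⟩
  have hcomp : connectedComponent x' ⊆ Subtype.val ⁻¹' W := by
    rw [← image_subset_iff, ← connectedComponentIn_eq_image]
    exact h
  obtain ⟨V', hV', hxV', hV'W⟩ := exists_isClopen_subset_of_connectedComponent_subset
    (hW.preimage continuous_subtype_val) hcomp
  obtain ⟨O, hO, rfl⟩ := isOpen_induced_iff.mp hV'.isOpen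
  have hVW : Subtype.val '' (Subtype.val ⁻¹' O : Set (closure W)) ⊆ W := by
    rwa [image_subset_iff]
  refine ⟨_, ⟨isClosed_closure.isClosedMap_subtype_val _ hV'.isClosed, ?_⟩, ⟨x', hxV', rfl⟩, hVW⟩
  rw [Subtype.image_preimage_coe] at hVW ⊢
  have hVeq : closure W ∩ O = W ∩ O :=
    Subset.antisymm (fun y hy => ⟨hVW hy, hy.2⟩) fun y hy => ⟨subset_closure hy.1, hy.2⟩
  exact hVeq ▸ hW.inter hO

theorem closure_connectedComponentIn_inter_frontier_nonempty {X : Type*} [TopologicalSpace X]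
    [CompactSpace X] [ConnectedSpace X] [T2Space X] {U : Set X} (hU : IsOpen U)
    (hU_ne_univ : U ≠ univ) {x : X} (hx : x ∈ U) :
    (closure (connectedComponentIn U x) ∩ frontier U).Nonempty := by
  set C := connectedComponentIn U x
  by_contra hdisj
  have hCU : closure C ⊆ U := fun y hy => by_contra fun hyU => hdisj
    ⟨y, hy, hU.frontier_eq ▸ ⟨closure_mono (connectedComponentIn_subset U x) hy, hyU⟩⟩
  obtain ⟨W, hW, hCW, hWU⟩ := normal_exists_closure_subset isClosed_closure hU hCU
  have hxW : x ∈ W := hCW (subset_closure (mem_connectedComponentIn hx))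
  obtain ⟨V, hV, hxV, hVW⟩ := exists_isClopen_subset_of_connectedComponentIn_closure_subset hW hxW
    ((connectedComponentIn_mono x hWU).trans (subset_closure.trans hCW))
  exact hU_ne_univ (eq_univ_of_univ_subset
    (hV.eq_univ ⟨x, hxV⟩ ▸ hVW.trans (subset_closure.trans hWU)))

theorem stmt_0_general {K : Type*} [TopologicalSpace K] [CompactSpace K] [ConnectedSpace K]
    [T2Space K] (U : Set K) (hUopen : IsOpen U) (hUprop : U ≠ Set.univ)
    (x : K) (hx : x ∈ U) :
    (closure (connectedComponentIn U x) ∩ frontier U).Nonempty ∧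
      (connectedComponentIn U x).Nontrivial := by
  obtain ⟨y, hyC, hyfr⟩ := closure_connectedComponentIn_inter_frontier_nonempty hUopen hUprop hx
  refine ⟨⟨y, hyC, hyfr⟩, ?_⟩
  by_contra hC
  rw [not_nontrivial_iff.mp hC |>.eq_singleton_of_mem (mem_connectedComponentIn hx),
    closure_singleton, mem_singleton_iff] at hyC
  exact (hUopen.frontier_eq ▸ hyfr).2 (hyC ▸ hx)

theorem stmt_0 {K : Type*} [TopologicalSpace K] [CompactSpace K] [ConnectedSpace K]
    [T2Space K] (U : Set K) (hUopen : IsOpen U) (hUne : U.Nonempty) (hUprop : U ≠ Set.univ)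
    (x : K) (hx : x ∈ U) :
    (closure (connectedComponentIn U x) ∩ frontier U).Nonempty ∧
      (connectedComponentIn U x).Nontrivial :=
  stmt_0_general U hUopen hUprop x hx
end

section
/- There exists a nonempty perfect subset of ℝ that is linearly independent over ℚ. -/
/-!
Send `σ : ℕ → Bool` to `∑ₙ 2^(-eₙ(σ))`, where `eₙ(σ) = (cₙ(σ) + 1) * 2^((n+1)^2)` and
`cₙ(σ) < 2^(n+1)` is the binary code of `σ 0, …, σ n`. This map of the Cantor space is
continuous and injective, so its image is a nonempty perfect set.

For independence, take finitely many distinct `σ` with nonzero integer coefficients and a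
level `N` at which their prefixes already differ. From level `N` on, the digit positions of
the different `σ` are distinct multiples of `G = 2^((N+1)^2)`, and `G` is large compared with
the coefficients. Multiplying the combination by `2^q`, where `q` is its smallest digit
position of level `N`, turns it into an integer plus a nonzero number of absolute value `< 1`,
because in such a sparse combination each digit dominates everything after it.
-/

open Finset Filter Topology

noncomputable section

def binSeries (p : ℕ → ℕ) : ℝ := ∑' n, (2 : ℝ)⁻¹ ^ p n

section BinSeries

variable {p : ℕ → ℕ}

lemma StrictMono.summable_inv_two_pow (hp : StrictMono p) :
    Summable fun n => (2 : ℝ)⁻¹ ^ p n :=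
  (summable_geometric_of_lt_one (by norm_num) (by norm_num)).of_nonneg_of_le
    (fun _ => by positivity) fun n => pow_le_pow_of_le_one (by norm_num) (by norm_num) (hp.id_le n)

lemma binSeries_nonneg : 0 ≤ binSeries p :=
  tsum_nonneg fun _ => by positivity

lemma binSeries_le (hp : StrictMono p) : binSeries p ≤ 2 * (2 : ℝ)⁻¹ ^ p 0 :=
  calc binSeries p ≤ ∑' n, (2 : ℝ)⁻¹ ^ p 0 * 2⁻¹ ^ n := by
        refine hp.summable_inv_two_pow.tsum_le_tsum (fun n => ?_)
          ((summable_geometric_of_lt_one (by norm_num) (by norm_num)).mul_left _)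
        rw [← pow_add]
        exact pow_le_pow_of_le_one (by norm_num) (by norm_num)
          (by simpa [add_comm] using hp.add_le_nat n 0)
    _ = 2 * (2 : ℝ)⁻¹ ^ p 0 := by rw [tsum_mul_left, tsum_geometric_inv_two, mul_comm]

lemma binSeries_eq_add (hp : StrictMono p) :
    binSeries p = (2 : ℝ)⁻¹ ^ p 0 + binSeries fun n => p (n + 1) :=
  hp.summable_inv_two_pow.tsum_eq_zero_add

lemma binSeries_eq_sum_add (hp : StrictMono p) (N : ℕ) :
    binSeries p = ∑ n ∈ range N, (2 : ℝ)⁻¹ ^ p n + binSeries fun n => p (n + N) :=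
  (hp.summable_inv_two_pow.sum_add_tsum_nat_add N).symm

end BinSeries

lemma Bool.toNat_injective : Function.Injective Bool.toNat := by decide

lemma Int.cast_add_ne_zero_of_abs_lt_one {z : ℤ} {y : ℝ} (hy : y ≠ 0) (hy1 : |y| < 1) :
    (z : ℝ) + y ≠ 0 := by
  intro h
  have hz : z = 0 := Int.abs_lt_one_iff.1 <| by
    rw [eq_neg_of_add_eq_zero_right h, abs_neg] at hy1
    exact_mod_cast hy1
  simp [hz, hy] at h

section Family

variable {ι : Type*} {t : Finset ι} {c : ι → ℤ} {p : ι → ℕ → ℕ} {G : ℕ}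

def PositionsSeparated (t : Finset ι) (p : ι → ℕ → ℕ) (G : ℕ) : Prop :=
  ∀ i ∈ t, ∀ j ∈ t, ∀ m n, (i, m) ≠ (j, n) → p i m ≤ p j n → p i m + G ≤ p j n

lemma PositionsSeparated.shift (h : PositionsSeparated t p G) (s : ι → ℕ) :
    PositionsSeparated t (fun i n => p i (n + s i)) G := by
  intro i hi j hj m n hne
  refine h i hi j hj _ _ ?_
  simp only [ne_eq, Prod.mk.injEq] at hne ⊢
  rintro ⟨rfl, hmn⟩
  exact hne ⟨rfl, by omega⟩

lemma abs_sum_mul_binSeries_le (hp : ∀ i ∈ t, StrictMono (p i)) {r : ℕ}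
    (hr : ∀ i ∈ t, r ≤ p i 0) :
    |∑ i ∈ t, (c i : ℝ) * binSeries (p i)| ≤ 2 * (∑ i ∈ t, |(c i : ℝ)|) * 2⁻¹ ^ r :=
  calc |∑ i ∈ t, (c i : ℝ) * binSeries (p i)|
      ≤ ∑ i ∈ t, |(c i : ℝ)| * (2 * 2⁻¹ ^ r) := by
        refine (abs_sum_le_sum_abs _ _).trans (sum_le_sum fun i hi => ?_)
        rw [abs_mul, abs_of_nonneg binSeries_nonneg]
        gcongr
        exact (binSeries_le (hp i hi)).trans <| mul_le_mul_of_nonneg_left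
          (pow_le_pow_of_le_one (by norm_num) (by norm_num) (hr i hi)) (by norm_num)
    _ = 2 * (∑ i ∈ t, |(c i : ℝ)|) * 2⁻¹ ^ r := by rw [← sum_mul]; ring

lemma sum_mul_binSeries_eq_add_shift [DecidableEq ι] {j : ι} (hj : j ∈ t)
    (hpj : StrictMono (p j)) :
    ∑ i ∈ t, (c i : ℝ) * binSeries (p i) = c j * 2⁻¹ ^ p j 0 +
      ∑ i ∈ t, (c i : ℝ) * binSeries fun n => p i (n + if i = j then 1 else 0) := by
  have hrest : ∀ i ∈ t.erase j,
      (c i : ℝ) * binSeries (fun n => p i (n + if i = j then 1 else 0)) = c i * binSeries (p i) :=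
    fun i hi => by simp [ne_of_mem_erase hi]
  rw [← add_sum_erase t _ hj, ← add_sum_erase t _ hj, sum_congr rfl hrest, binSeries_eq_add hpj,
    if_pos rfl]
  ring

lemma abs_sum_mul_binSeries_shift_lt [DecidableEq ι] (hp : ∀ i ∈ t, StrictMono (p i))
    (hsep : PositionsSeparated t p G) (hG : 2 * ∑ i ∈ t, |(c i : ℝ)| < 2 ^ G) {j : ι} (hj : j ∈ t)
    (hmin : ∀ i ∈ t, p j 0 ≤ p i 0) :
    |∑ i ∈ t, (c i : ℝ) * binSeries fun n => p i (n + if i = j then 1 else 0)| < 2⁻¹ ^ p j 0 := by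
  have hgap : ∀ i ∈ t, p j 0 + G ≤ p i (0 + if i = j then 1 else 0) := by
    refine fun i hi => hsep j hj i hi _ _ ?_ ((hmin i hi).trans ((hp i hi).monotone (by omega)))
    by_cases hij : i = j
    · simp [hij]
    · simp [Ne.symm hij]
  calc _ ≤ 2 * (∑ i ∈ t, |(c i : ℝ)|) * 2⁻¹ ^ (p j 0 + G) :=
        abs_sum_mul_binSeries_le (fun i hi => (hp i hi).comp (strictMono_id.add_const _)) hgap
    _ = 2⁻¹ ^ p j 0 * (2 * (∑ i ∈ t, |(c i : ℝ)|) / 2 ^ G) := by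
        rw [pow_add, div_eq_mul_inv _ ((2 : ℝ) ^ G), ← inv_pow]; ring
    _ < 2⁻¹ ^ p j 0 :=
        mul_lt_of_lt_one_right (by positivity) ((div_lt_one (by positivity)).2 hG)

theorem sum_mul_binSeries_ne_zero (ht : t.Nonempty) (hc : ∀ i ∈ t, c i ≠ 0)
    (hp : ∀ i ∈ t, StrictMono (p i)) (hsep : PositionsSeparated t p G)
    (hG : 2 * ∑ i ∈ t, |(c i : ℝ)| < 2 ^ G) :
    ∑ i ∈ t, (c i : ℝ) * binSeries (p i) ≠ 0 := by
  classical
  obtain ⟨j, hj, hmin⟩ := t.exists_min_image (fun i => p i 0) ht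
  have hlead : (2 : ℝ)⁻¹ ^ p j 0 ≤ |(c j : ℝ) * 2⁻¹ ^ p j 0| := by
    rw [abs_mul, abs_of_pos (by positivity : (0 : ℝ) < 2⁻¹ ^ p j 0)]
    exact le_mul_of_one_le_left (by positivity) (by exact_mod_cast Int.one_le_abs (hc j hj))
  have hrest := abs_sum_mul_binSeries_shift_lt hp hsep hG hj hmin
  rw [sum_mul_binSeries_eq_add_shift hj (hp j hj)]
  intro h
  rw [eq_neg_of_add_eq_zero_left h, abs_neg] at hlead
  linarith

lemma exists_int_two_pow_mul_sum_eq {N q : ℕ} (hq : ∀ i ∈ t, ∀ n < N, p i n ≤ q) :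
    ∃ z : ℤ, (2 : ℝ) ^ q * ∑ i ∈ t, (c i : ℝ) * ∑ n ∈ range N, 2⁻¹ ^ p i n = z := by
  refine ⟨∑ i ∈ t, c i * ∑ n ∈ range N, 2 ^ (q - p i n), ?_⟩
  push_cast
  rw [mul_sum]
  refine sum_congr rfl fun i hi => ?_
  rw [mul_left_comm, mul_sum]
  congr 1
  refine sum_congr rfl fun n hn => ?_
  rw [inv_pow, ← div_eq_mul_inv, div_eq_iff (by positivity), ← pow_add,
    Nat.sub_add_cancel (hq i hi n (mem_range.1 hn))]

theorem sum_mul_binSeries_ne_zero_of_separated_from (N : ℕ) (ht : t.Nonempty)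
    (hc : ∀ i ∈ t, c i ≠ 0) (hp : ∀ i ∈ t, StrictMono (p i))
    (hsep : PositionsSeparated t (fun i n => p i (n + N)) G)
    (hlow : ∀ i ∈ t, ∀ j ∈ t, ∀ n < N, p i n ≤ p j N)
    (hG : 2 * ∑ i ∈ t, |(c i : ℝ)| < 2 ^ G) :
    ∑ i ∈ t, (c i : ℝ) * binSeries (p i) ≠ 0 := by
  classical
  set p' : ι → ℕ → ℕ := fun i n => p i (n + N)
  have hp' : ∀ i ∈ t, StrictMono (p' i) :=
    fun i hi => (hp i hi).comp (strictMono_id.add_const N)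
  obtain ⟨j, hj, hmin⟩ := t.exists_min_image (fun i => p' i 0) ht
  set q := p' j 0
  set R := ∑ i ∈ t, (c i : ℝ) * binSeries fun n => p' i (n + if i = j then 1 else 0)
  obtain ⟨z, hz⟩ := exists_int_two_pow_mul_sum_eq (c := c) (q := q)
    fun i hi n hn => (hlow i hi j hj n hn).trans_eq (by simp [q, p'])
  have hsplit : ∑ i ∈ t, (c i : ℝ) * binSeries (p i) =
      ∑ i ∈ t, (c i : ℝ) * ∑ n ∈ range N, 2⁻¹ ^ p i n + (c j * 2⁻¹ ^ q + R) := by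
    rw [← sum_mul_binSeries_eq_add_shift hj (hp' j hj), ← sum_add_distrib]
    exact sum_congr rfl fun i hi => by rw [binSeries_eq_sum_add (hp i hi) N, mul_add]
  have hR0 : R ≠ 0 := sum_mul_binSeries_ne_zero ht hc
    (fun i hi => (hp' i hi).comp (strictMono_id.add_const _)) (hsep.shift _) hG
  have hR1 : |R| < 2⁻¹ ^ q := abs_sum_mul_binSeries_shift_lt hp' hsep hG hj hmin
  have hq : (2 : ℝ) ^ q * 2⁻¹ ^ q = 1 := by rw [← mul_pow]; norm_num
  intro h
  refine Int.cast_add_ne_zero_of_abs_lt_one (z := z + c j) (y := 2 ^ q * R)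
    (mul_ne_zero (by positivity) hR0) ?_ ?_
  · rw [abs_mul, abs_of_pos (by positivity)]
    calc (2 : ℝ) ^ q * |R| < 2 ^ q * 2⁻¹ ^ q := by gcongr
      _ = 1 := hq
  · calc ((z + c j : ℤ) : ℝ) + 2 ^ q * R
        = 2 ^ q * ∑ i ∈ t, (c i : ℝ) * ∑ n ∈ range N, 2⁻¹ ^ p i n
          + c j * (2 ^ q * 2⁻¹ ^ q) + 2 ^ q * R := by rw [hz, hq]; push_cast; ring
      _ = 2 ^ q * ∑ i ∈ t, (c i : ℝ) * binSeries (p i) := by rw [hsplit]; ring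
      _ = 0 := by rw [h, mul_zero]

end Family

def prefixCode (σ : ℕ → Bool) (n : ℕ) : ℕ := ∑ k ∈ range (n + 1), (σ k).toNat * 2 ^ k

def bitPos (σ : ℕ → Bool) (n : ℕ) : ℕ := (prefixCode σ n + 1) * 2 ^ (n + 1) ^ 2

def cantorToReal (σ : ℕ → Bool) : ℝ := binSeries (bitPos σ)

section Cantor

variable {σ τ : ℕ → Bool} {m n : ℕ}

lemma prefixCode_succ :
    prefixCode σ (n + 1) = prefixCode σ n + (σ (n + 1)).toNat * 2 ^ (n + 1) :=
  sum_range_succ _ _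

lemma prefixCode_lt : prefixCode σ n < 2 ^ (n + 1) := by
  induction n with
  | zero => simpa [prefixCode] using Bool.toNat_lt (σ 0)
  | succ n ih =>
    rw [prefixCode_succ, pow_succ _ (n + 1)]
    cases σ (n + 1) <;> simp <;> omega

lemma prefixCode_succ_mod : prefixCode σ (n + 1) % 2 ^ (n + 1) = prefixCode σ n := by
  rw [prefixCode_succ, Nat.add_mul_mod_self_right, Nat.mod_eq_of_lt prefixCode_lt]

lemma prefixCode_succ_div : prefixCode σ (n + 1) / 2 ^ (n + 1) = (σ (n + 1)).toNat := by
  rw [prefixCode_succ, Nat.add_mul_div_right _ _ (by positivity), Nat.div_eq_of_lt prefixCode_lt,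
    zero_add]

lemma eq_of_prefixCode_eq (h : prefixCode σ n = prefixCode τ n) {k : ℕ} (hk : k ≤ n) :
    σ k = τ k := by
  induction n with
  | zero => exact Nat.le_zero.1 hk ▸ Bool.toNat_injective (by simpa [prefixCode] using h)
  | succ n ih =>
    rcases hk.lt_or_eq with hk | rfl
    · exact ih (by rw [← prefixCode_succ_mod, h, prefixCode_succ_mod]) (by omega)
    · exact Bool.toNat_injective (by rw [← prefixCode_succ_div, h, prefixCode_succ_div])

lemma bitPos_lt_bitPos (h : m < n) : bitPos σ m < bitPos τ n :=
  calc bitPos σ m ≤ 2 ^ (m + 1) * 2 ^ (m + 1) ^ 2 := Nat.mul_le_mul_right _ prefixCode_lt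
    _ = 2 ^ ((m + 1) ^ 2 + (m + 1)) := by rw [← pow_add, add_comm]
    _ < 2 ^ (n + 1) ^ 2 := Nat.pow_lt_pow_right one_lt_two (by nlinarith)
    _ ≤ bitPos τ n := Nat.le_mul_of_pos_left _ (Nat.succ_pos _)

lemma bitPos_strictMono (σ : ℕ → Bool) : StrictMono (bitPos σ) :=
  fun _ _ h => bitPos_lt_bitPos h

lemma pow_dvd_bitPos {K : ℕ} (h : K ≤ n) : 2 ^ (K + 1) ^ 2 ∣ bitPos σ n :=
  Dvd.dvd.mul_left (Nat.pow_dvd_pow 2 (by gcongr)) _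

lemma prefixCode_eq_of_bitPos_eq (h : bitPos σ n = bitPos τ n) :
    prefixCode σ n = prefixCode τ n :=
  Nat.succ_injective (Nat.eq_of_mul_eq_mul_right (by positivity) h)

lemma separated_bitPos {t : Finset (ℕ → Bool)} {N : ℕ}
    (ht : ∀ σ ∈ t, ∀ τ ∈ t, σ ≠ τ → ∃ k ≤ N, σ k ≠ τ k) :
    PositionsSeparated t (fun σ n => bitPos σ (n + N)) (2 ^ (N + 1) ^ 2) := by
  intro σ hσ τ hτ m n hne hle
  simp only at hle ⊢
  have hne' : bitPos σ (m + N) ≠ bitPos τ (n + N) := by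
    rcases lt_trichotomy m n with hmn | rfl | hmn
    · exact (bitPos_lt_bitPos (by omega)).ne
    · intro h
      obtain ⟨k, hk, hστ⟩ := ht σ hσ τ hτ (by simpa using hne)
      exact hστ (eq_of_prefixCode_eq (prefixCode_eq_of_bitPos_eq h) (by omega))
    · exact (bitPos_lt_bitPos (by omega)).ne'
  have hdvd := Nat.dvd_sub (pow_dvd_bitPos (σ := τ) (by omega : N ≤ n + N))
    (pow_dvd_bitPos (σ := σ) (by omega : N ≤ m + N))
  have := Nat.le_of_dvd (by omega) hdvd
  omega

end Cantor

lemma eventually_exists_ne_of_ne {β : Type*} (t : Finset (ℕ → β)) :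
    ∀ᶠ N in atTop, ∀ σ ∈ t, ∀ τ ∈ t, σ ≠ τ → ∃ k ≤ N, σ k ≠ τ k := by
  simp only [eventually_all_finset]
  intro σ _ τ _
  by_cases h : σ = τ
  · simp [h]
  · obtain ⟨k, hk⟩ := Function.ne_iff.1 h
    filter_upwards [eventually_ge_atTop k] with N hN _ using ⟨k, hN, hk⟩

lemma sum_mul_cantorToReal_ne_zero {t : Finset (ℕ → Bool)} (ht : t.Nonempty)
    {c : (ℕ → Bool) → ℤ} (hc : ∀ σ ∈ t, c σ ≠ 0) : ∑ σ ∈ t, (c σ : ℝ) * cantorToReal σ ≠ 0 := by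
  obtain ⟨N, hsep, hN⟩ := (eventually_exists_ne_of_ne t |>.and
    ((tendsto_pow_atTop_atTop_of_one_lt one_lt_two).eventually_gt_atTop
      (2 * ∑ σ ∈ t, |(c σ : ℝ)|))).exists
  have hNG : N ≤ 2 ^ (N + 1) ^ 2 :=
    Nat.lt_two_pow_self.le.trans (Nat.pow_le_pow_right two_pos (by nlinarith))
  exact sum_mul_binSeries_ne_zero_of_separated_from N ht hc (fun σ _ => bitPos_strictMono σ)
    (separated_bitPos hsep) (fun _ _ _ _ _ hn => (bitPos_lt_bitPos hn).le)
    (hN.trans_le (pow_le_pow_right₀ one_le_two hNG))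

theorem linearIndependent_cantorToReal : LinearIndependent ℚ cantorToReal := by
  rw [← LinearIndependent.iff_fractionRing ℤ ℚ, linearIndependent_iff]
  intro l hl
  by_contra hne
  refine sum_mul_cantorToReal_ne_zero (Finsupp.support_nonempty_iff.2 hne)
    (fun σ hσ => Finsupp.mem_support_iff.1 hσ) ?_
  simpa [Finsupp.linearCombination_apply, Finsupp.sum] using hl

lemma continuous_bitPos (n : ℕ) : Continuous fun σ => bitPos σ n := by
  have : Continuous fun σ => prefixCode σ n := continuous_finsetSum _ fun k _ =>
    (continuous_of_discreteTopology (f := fun b : Bool => b.toNat * 2 ^ k)).comp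
      (continuous_apply k)
  exact (continuous_of_discreteTopology (f := fun v : ℕ => (v + 1) * 2 ^ (n + 1) ^ 2)).comp this

lemma continuous_cantorToReal : Continuous cantorToReal :=
  continuous_tsum
    (fun n => (continuous_of_discreteTopology (f := fun e : ℕ => (2 : ℝ)⁻¹ ^ e)).comp
      (continuous_bitPos n))
    (summable_geometric_of_lt_one (by norm_num) (by norm_num : (2 : ℝ)⁻¹ < 1))
    fun n σ => by
      rw [norm_pow, norm_inv, Real.norm_two]
      exact pow_le_pow_of_le_one (by norm_num) (by norm_num) ((bitPos_strictMono σ).id_le n)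

instance Pi.perfectSpace {ι : Type*} [Infinite ι] {X : ι → Type*}
    [∀ i, TopologicalSpace (X i)] [∀ i, Nontrivial (X i)] : PerfectSpace (∀ i, X i) := by
  classical
  refine perfectSpace_iff_forall_not_isolated.2 fun x => ?_
  choose y hy using fun i => exists_ne (x i)
  have : Tendsto (fun i => Function.update x i (y i)) cofinite (𝓝[≠] x) := by
    refine tendsto_nhdsWithin_iff.2 ⟨tendsto_pi_nhds.2 fun k => ?_, .of_forall fun i => ?_⟩
    · exact tendsto_const_nhds.congr' <| (eventually_cofinite_ne k).mono
        fun i hi => (Function.update_of_ne (Ne.symm hi) _ _).symm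
    · exact fun h => hy i (by simpa using congrFun h i)
  exact this.neBot

lemma Continuous.preperfect_range {X Y : Type*} [TopologicalSpace X] [TopologicalSpace Y]
    [PerfectSpace X] {f : X → Y} (hf : Continuous f) (hinj : Function.Injective f) :
    Preperfect (Set.range f) := by
  rintro _ ⟨x, rfl⟩
  simpa [← Set.image_univ] using
    (PerfectSpace.univ_preperfect x (Set.mem_univ x)).map hf.continuousAt hinj

end

theorem stmt_2 :
    ∃ P : Set ℝ, P.Nonempty ∧ Perfect P ∧ LinearIndependent ℚ ((↑) : P → ℝ) := by
  have hinj := linearIndependent_cantorToReal.injective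
  refine ⟨Set.range cantorToReal, Set.range_nonempty _, ⟨?_, ?_⟩, ?_⟩
  · exact (isCompact_range continuous_cantorToReal).isClosed
  · exact continuous_cantorToReal.preperfect_range hinj
  · exact (linearIndepOn_id_range_iff hinj).2 linearIndependent_cantorToReal
end

section
/- There exists a closed zero-dimensional set Z ⊆ (−1,1) × ℝ such that Z meets the graph of every continuous function g : [−1,1] → ℝ, and such that for all but countably many x ∈ (−1,1) the vertical section Z_x = {y : (x,y) ∈ Z} is a singleton, while for the remaining countably many x (which form a dense subset X of (−1,1)) the section Z_x has exactly two points. -/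
/-!
`stair x = ∑ 8⁻ⁿ ⌊2ⁿ x⌋` is increasing and right-continuous, its left limit is
`stairLeft x = ∑ 8⁻ⁿ (⌈2ⁿ x⌉ - 1)`, and the two differ exactly at the dyadic rationals. The set is
`{(x, y) | -1 < x < 1, y = curveLeft x ∨ y = curve x}`, where `curve = x / (1 - x²) - stair x`
and `curveLeft` is its left limit: the graph of `curve` with each jump replaced by its two ends.

By the one-sided limits, points of the set near `(a, _)` have heights near `curveLeft a` or
`curve a`, and the blow-up at `±1` keeps it away from `x = ±1`, so it is closed. The gap over a
dyadic `d` lets an open cut through `d` split it into the parts left and right of `d`; since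
dyadics are dense, it is totally disconnected. Finally `curve` jumps only downwards and runs from
`-∞` to `+∞`, so for continuous `g` the supremum `T` of `{x | curveLeft x < g x}` has
`g T = curve T`.
-/

open Filter Topology Set

noncomputable section

lemma Filter.Tendsto.eventually_ne_of_disjoint {α β : Type*} {l : Filter α} {f g : α → β}
    {F G : Filter β} (hf : Tendsto f l F) (hg : Tendsto g l G) (hFG : Disjoint F G) :
    ∀ᶠ x in l, f x ≠ g x := by
  obtain ⟨U, hU, V, hV, hUV⟩ := Filter.disjoint_iff.mp hFG
  filter_upwards [hf hU, hg hV] with x hx hy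
  exact hUV.ne_of_mem hx hy

namespace DyadicBarrier

def stairSeries (φ : ℝ → ℝ) (x : ℝ) : ℝ := ∑' n : ℕ, (8⁻¹ : ℝ) ^ n * φ (2 ^ n * x)

def stair : ℝ → ℝ := stairSeries fun t => ⌊t⌋

def stairLeft : ℝ → ℝ := stairSeries fun t => ⌈t⌉ - 1

lemma abs_floor_le (t : ℝ) : |(⌊t⌋ : ℝ)| ≤ |t| + 1 := by
  rw [abs_le]
  constructor <;> linarith [Int.sub_one_lt_floor t, Int.floor_le t, neg_abs_le t, le_abs_self t]

lemma abs_ceil_sub_one_le (t : ℝ) : |(⌈t⌉ : ℝ) - 1| ≤ |t| + 1 := by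
  rw [abs_le]
  constructor <;> linarith [Int.le_ceil t, Int.ceil_lt_add_one t, neg_abs_le t, le_abs_self t]

section Series

variable {φ : ℝ → ℝ} (hφ : ∀ t, |φ t| ≤ |t| + 1)
include hφ

lemma abs_stairTerm_le (n : ℕ) {x C : ℝ} (hx : |x| ≤ C) :
    |(8⁻¹ : ℝ) ^ n * φ (2 ^ n * x)| ≤ (C + 1) * 4⁻¹ ^ n := by
  have h2 : (1 : ℝ) ≤ 2 ^ n := one_le_pow₀ (by norm_num)
  calc |(8⁻¹ : ℝ) ^ n * φ (2 ^ n * x)| ≤ 8⁻¹ ^ n * (2 ^ n * C + 1) := by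
        rw [abs_mul, abs_of_pos (by positivity)]
        gcongr
        calc |φ (2 ^ n * x)| ≤ |2 ^ n * x| + 1 := hφ _
          _ ≤ 2 ^ n * C + 1 := by rw [abs_mul, abs_of_pos (by positivity)]; gcongr
    _ ≤ 8⁻¹ ^ n * (2 ^ n * (C + 1)) := by gcongr; nlinarith [abs_nonneg x]
    _ = (C + 1) * 4⁻¹ ^ n := by rw [← mul_assoc, ← mul_pow]; norm_num; ring

lemma summable_stairTerm (x : ℝ) : Summable fun n : ℕ => (8⁻¹ : ℝ) ^ n * φ (2 ^ n * x) :=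
  .of_norm_bounded ((summable_geometric_of_lt_one (by norm_num) (by norm_num)).mul_left _)
    fun n => abs_stairTerm_le hφ n le_rfl

lemma tendsto_stairSeries {l : Filter ℝ} {x : ℝ} (hl : l ≤ 𝓝 x) {c : ℕ → ℝ}
    (hc : ∀ n : ℕ, Tendsto (fun u => φ (2 ^ n * u)) l (𝓝 (c n))) :
    Tendsto (stairSeries φ) l (𝓝 (∑' n : ℕ, (8⁻¹ : ℝ) ^ n * c n)) := by
  refine tendsto_tsum_of_dominated_convergence (bound := fun n => (|x| + 2) * 4⁻¹ ^ n)
    ((summable_geometric_of_lt_one (by norm_num) (by norm_num)).mul_left _)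
    (fun n => (hc n).const_mul _) ?_
  filter_upwards [hl (Metric.closedBall_mem_nhds x one_pos)] with u hu n
  have : |u| ≤ |x| + 1 := by
    rw [Metric.mem_closedBall, Real.dist_eq] at hu
    linarith [abs_sub_abs_le_abs_sub u x]
  simpa [add_assoc, one_add_one_eq_two] using abs_stairTerm_le hφ n this

variable {ψ : ℝ → ℝ} (hψ : ∀ t, |ψ t| ≤ |t| + 1)
include hψ

lemma stairSeries_le_stairSeries {x y : ℝ} (h : ∀ n : ℕ, φ (2 ^ n * x) ≤ ψ (2 ^ n * y)) :
    stairSeries φ x ≤ stairSeries ψ y :=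
  (summable_stairTerm hφ x).tsum_le_tsum
    (fun n => mul_le_mul_of_nonneg_left (h n) (by positivity)) (summable_stairTerm hψ y)

lemma stairSeries_lt_stairSeries {x y : ℝ} (h : ∀ n : ℕ, φ (2 ^ n * x) ≤ ψ (2 ^ n * y))
    {m : ℕ} (hm : φ (2 ^ m * x) < ψ (2 ^ m * y)) : stairSeries φ x < stairSeries ψ y :=
  (summable_stairTerm hφ x).tsum_lt_tsum
    (fun n => mul_le_mul_of_nonneg_left (h n) (by positivity))
    (mul_lt_mul_of_pos_left hm (by positivity)) (summable_stairTerm hψ y)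

end Series

lemma stair_mono : Monotone stair := fun _ _ hxy =>
  stairSeries_le_stairSeries abs_floor_le abs_floor_le fun _ =>
    Int.cast_le.mpr (Int.floor_mono (mul_le_mul_of_nonneg_left hxy (by positivity)))

lemma ceil_sub_one_le_floor {a b : ℝ} (hab : a ≤ b) : (⌈a⌉ : ℝ) - 1 ≤ ⌊b⌋ := by
  have : ⌈a⌉ - 1 ≤ ⌊b⌋ := Int.le_floor.mpr (by push_cast; linarith [Int.ceil_lt_add_one a])
  exact_mod_cast this

lemma floor_le_ceil_sub_one {a b : ℝ} (hab : a < b) : (⌊a⌋ : ℝ) ≤ ⌈b⌉ - 1 := by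
  have : ⌊a⌋ < ⌈b⌉ := (Int.cast_lt (R := ℝ)).mp (by linarith [Int.floor_le a, Int.le_ceil b])
  exact_mod_cast Int.le_sub_one_of_lt this

lemma stairLeft_le_stair {x y : ℝ} (hxy : x ≤ y) : stairLeft x ≤ stair y :=
  stairSeries_le_stairSeries abs_ceil_sub_one_le abs_floor_le fun _ =>
    ceil_sub_one_le_floor (mul_le_mul_of_nonneg_left hxy (by positivity))

lemma stair_le_stairLeft {x y : ℝ} (hxy : x < y) : stair x ≤ stairLeft y :=
  stairSeries_le_stairSeries abs_floor_le abs_ceil_sub_one_le fun _ =>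
    floor_le_ceil_sub_one (mul_lt_mul_of_pos_left hxy (by positivity))

lemma tendsto_stair_nhdsGE (x : ℝ) : Tendsto stair (𝓝[≥] x) (𝓝 (stair x)) :=
  tendsto_stairSeries abs_floor_le nhdsWithin_le_nhds fun n =>
    (tendsto_pure_nhds _ _).comp
      ((tendsto_floor_right_pure_floor _).comp ((continuous_const_mul _).continuousWithinAt
        |>.tendsto_nhdsWithin (monotone_mul_left_of_nonneg (by positivity)).mapsTo_Ici))

lemma tendsto_stairLeft_nhdsLE (x : ℝ) : Tendsto stairLeft (𝓝[≤] x) (𝓝 (stairLeft x)) :=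
  tendsto_stairSeries abs_ceil_sub_one_le nhdsWithin_le_nhds fun n =>
    (tendsto_pure_nhds (fun k : ℤ => (k : ℝ) - 1) _).comp
      ((tendsto_ceil_left_pure_ceil _).comp ((continuous_const_mul _).continuousWithinAt
        |>.tendsto_nhdsWithin (monotone_mul_left_of_nonneg (by positivity)).mapsTo_Iic))

lemma tendsto_stair_nhdsLT (x : ℝ) : Tendsto stair (𝓝[<] x) (𝓝 (stairLeft x)) :=
  tendsto_of_tendsto_of_tendsto_of_le_of_le'
    ((tendsto_stairLeft_nhdsLE x).mono_left (nhdsWithin_mono _ Iio_subset_Iic_self))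
    tendsto_const_nhds
    (eventually_nhdsWithin_of_forall fun _ _ => stairLeft_le_stair le_rfl)
    (eventually_nhdsWithin_of_forall fun _ hu => stair_le_stairLeft hu)

lemma tendsto_stairLeft_nhdsGT (x : ℝ) : Tendsto stairLeft (𝓝[>] x) (𝓝 (stair x)) :=
  tendsto_of_tendsto_of_tendsto_of_le_of_le' tendsto_const_nhds
    ((tendsto_stair_nhdsGE x).mono_left (nhdsWithin_mono _ Ioi_subset_Ici_self))
    (eventually_nhdsWithin_of_forall fun _ hu => stair_le_stairLeft hu)
    (eventually_nhdsWithin_of_forall fun _ _ => stairLeft_le_stair le_rfl)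

def dyadics : Set ℝ := range fun p : ℕ × ℤ => (p.2 : ℝ) / 2 ^ p.1

lemma dyadics_countable : dyadics.Countable := countable_range _

lemma dense_dyadics : Dense dyadics := by
  refine dense_of_exists_between fun a b hab => ?_
  obtain ⟨n, hn⟩ := exists_pow_lt_of_lt_one (sub_pos.mpr hab) (by norm_num : (2⁻¹ : ℝ) < 1)
  have h2n : (0 : ℝ) < 2 ^ n := by positivity
  refine ⟨_, ⟨(n, ⌊2 ^ n * a⌋ + 1), rfl⟩, ?_, ?_⟩
  · rw [lt_div_iff₀ h2n]
    push_cast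
    linarith [Int.lt_floor_add_one (2 ^ n * a)]
  · rw [div_lt_iff₀ h2n]
    push_cast
    rw [inv_pow, inv_lt_iff_one_lt_mul₀ h2n] at hn
    nlinarith [Int.floor_le (2 ^ n * a)]

lemma stairLeft_lt_stair {x : ℝ} (hx : x ∈ dyadics) : stairLeft x < stair x := by
  obtain ⟨⟨m, k⟩, rfl⟩ := hx
  have hk : (2 : ℝ) ^ m * (k / 2 ^ m) = k := mul_div_cancel₀ _ (by positivity)
  refine stairSeries_lt_stairSeries abs_ceil_sub_one_le abs_floor_le
    (fun _ => ceil_sub_one_le_floor le_rfl) (m := m) ?_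
  simp only [hk, Int.ceil_intCast, Int.floor_intCast]
  linarith

lemma stairLeft_eq_stair {x : ℝ} (hx : x ∉ dyadics) : stairLeft x = stair x := by
  refine tsum_congr fun n => ?_
  have : 2 ^ n * x ∉ range ((↑) : ℤ → ℝ) := by
    rintro ⟨k, hk⟩
    exact hx ⟨(n, k), by simp [hk]⟩
  simp [(Int.ceil_eq_floor_add_one_iff_notMem _).mpr this]

def blowup (x : ℝ) : ℝ := x / (1 - x ^ 2)

def curve (x : ℝ) : ℝ := blowup x - stair x

def curveLeft (x : ℝ) : ℝ := blowup x - stairLeft x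

def barrier : Set (ℝ × ℝ) :=
  {p | p.1 ∈ Ioo (-1) 1 ∧ (p.2 = curveLeft p.1 ∨ p.2 = curve p.1)}

lemma one_sub_sq_pos {x : ℝ} (hx : x ∈ Ioo (-1 : ℝ) 1) : 0 < 1 - x ^ 2 := by
  nlinarith [hx.1, hx.2]

lemma continuousAt_blowup {x : ℝ} (hx : x ∈ Ioo (-1 : ℝ) 1) : ContinuousAt blowup x :=
  continuousAt_id.div (by fun_prop) (one_sub_sq_pos hx).ne'

lemma tendsto_one_sub_sq {a : ℝ} (ha : a ^ 2 = 1) :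
    Tendsto (fun x : ℝ => 1 - x ^ 2) (𝓝[Ioo (-1) 1] a) (𝓝[>] 0) :=
  tendsto_nhdsWithin_iff.mpr ⟨by simpa [ha] using ((by fun_prop : Continuous fun x : ℝ =>
      1 - x ^ 2).tendsto a).mono_left nhdsWithin_le_nhds,
    eventually_nhdsWithin_of_forall fun _ hx => one_sub_sq_pos hx⟩

lemma tendsto_blowup_nhdsLT_one : Tendsto blowup (𝓝[<] 1) atTop := by
  have hle : 𝓝[<] (1 : ℝ) ≤ 𝓝[Ioo (-1) 1] 1 := nhdsWithin_le_of_mem (Ioo_mem_nhdsLT (by norm_num))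
  exact Tendsto.pos_mul_atTop one_pos (tendsto_id.mono_left nhdsWithin_le_nhds)
    (tendsto_inv_nhdsGT_zero.comp ((tendsto_one_sub_sq (by norm_num)).mono_left hle))

lemma tendsto_blowup_nhdsGT_neg_one : Tendsto blowup (𝓝[>] (-1)) atBot := by
  have hle : 𝓝[>] (-1 : ℝ) ≤ 𝓝[Ioo (-1) 1] (-1) :=
    nhdsWithin_le_of_mem (Ioo_mem_nhdsGT (by norm_num))
  exact Tendsto.neg_mul_atTop (by norm_num : (-1 : ℝ) < 0) (tendsto_id.mono_left nhdsWithin_le_nhds)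
    (tendsto_inv_nhdsGT_zero.comp ((tendsto_one_sub_sq (by norm_num)).mono_left hle))

section Curves

variable {a : ℝ} (ha : a ∈ Ioo (-1 : ℝ) 1)
include ha

lemma tendsto_curve_nhdsGE : Tendsto curve (𝓝[≥] a) (𝓝 (curve a)) :=
  ((continuousAt_blowup ha).tendsto.mono_left nhdsWithin_le_nhds).sub (tendsto_stair_nhdsGE a)

lemma tendsto_curve_nhdsLT : Tendsto curve (𝓝[<] a) (𝓝 (curveLeft a)) :=
  ((continuousAt_blowup ha).tendsto.mono_left nhdsWithin_le_nhds).sub (tendsto_stair_nhdsLT a)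

lemma tendsto_curveLeft_nhdsLE : Tendsto curveLeft (𝓝[≤] a) (𝓝 (curveLeft a)) :=
  ((continuousAt_blowup ha).tendsto.mono_left nhdsWithin_le_nhds).sub (tendsto_stairLeft_nhdsLE a)

lemma tendsto_curveLeft_nhdsGT : Tendsto curveLeft (𝓝[>] a) (𝓝 (curve a)) :=
  ((continuousAt_blowup ha).tendsto.mono_left nhdsWithin_le_nhds).sub (tendsto_stairLeft_nhdsGT a)

lemma tendsto_curve_nhds : Tendsto curve (𝓝 a) (𝓝 (curveLeft a) ⊔ 𝓝 (curve a)) := by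
  rw [← nhdsLT_sup_nhdsGE]
  exact (tendsto_curve_nhdsLT ha).sup_sup (tendsto_curve_nhdsGE ha)

lemma tendsto_curveLeft_nhds : Tendsto curveLeft (𝓝 a) (𝓝 (curveLeft a) ⊔ 𝓝 (curve a)) := by
  rw [← nhdsLE_sup_nhdsGT]
  exact (tendsto_curveLeft_nhdsLE ha).sup_sup (tendsto_curveLeft_nhdsGT ha)

end Curves

lemma curve_le_curveLeft (x : ℝ) : curve x ≤ curveLeft x :=
  sub_le_sub_left (stairLeft_le_stair le_rfl) _

lemma curve_lt_curveLeft {x : ℝ} (hx : x ∈ dyadics) : curve x < curveLeft x :=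
  sub_lt_sub_left (stairLeft_lt_stair hx) _

lemma curveLeft_eq_curve {x : ℝ} (hx : x ∉ dyadics) : curveLeft x = curve x := by
  rw [curve, curveLeft, stairLeft_eq_stair hx]

lemma tendsto_curveLeft_nhdsLT_one : Tendsto curveLeft (𝓝[<] 1) atTop :=
  tendsto_atTop_add_right_of_le' _ (-stair 1) tendsto_blowup_nhdsLT_one
    (eventually_nhdsWithin_of_forall fun _ hx => neg_le_neg (stairLeft_le_stair (le_of_lt hx)))

lemma tendsto_curveLeft_nhdsGT_neg_one : Tendsto curveLeft (𝓝[>] (-1)) atBot :=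
  tendsto_atBot_add_right_of_ge' _ (-stair (-1)) tendsto_blowup_nhdsGT_neg_one
    (eventually_nhdsWithin_of_forall fun _ hx => neg_le_neg (stair_le_stairLeft hx))

lemma eventually_notMem_barrier {a b : ℝ} (ha : a ∈ Ioo (-1 : ℝ) 1) (hb₁ : b ≠ curveLeft a)
    (hb₂ : b ≠ curve a) : ∀ᶠ z in 𝓝 (a, b), z ∉ barrier := by
  have hdisj : Disjoint (𝓝 b) (𝓝 (curveLeft a) ⊔ 𝓝 (curve a)) :=
    disjoint_sup_right.mpr ⟨disjoint_nhds_nhds.mpr hb₁, disjoint_nhds_nhds.mpr hb₂⟩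
  have hfst : Tendsto Prod.fst (𝓝 (a, b)) (𝓝 a) := continuous_fst.tendsto _
  have hsnd : Tendsto Prod.snd (𝓝 (a, b)) (𝓝 b) := continuous_snd.tendsto _
  filter_upwards [hsnd.eventually_ne_of_disjoint
      ((tendsto_curveLeft_nhds ha).comp hfst) hdisj,
    hsnd.eventually_ne_of_disjoint ((tendsto_curve_nhds ha).comp hfst) hdisj]
    with z h₁ h₂ hz
  exact hz.2.elim h₁ h₂

lemma sub_blowup_sub_mul {x : ℝ} (hx : x ∈ Ioo (-1 : ℝ) 1) (j : ℝ) :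
    x - (blowup x - j) * (1 - x ^ 2) = j * (1 - x ^ 2) := by
  rw [blowup, sub_mul, div_mul_cancel₀ _ (one_sub_sq_pos hx).ne']
  ring

lemma exists_isClosed_superset_barrier :
    ∃ B : Set (ℝ × ℝ), IsClosed B ∧ barrier ⊆ B ∧ ∀ p ∈ B, p.1 ∈ Ioo (-1 : ℝ) 1 := by
  -- clear the denominator of `blowup` in the bounds `stair (-1) ≤ blowup x - y ≤ stair 1`
  refine ⟨{p | p.1 ∈ Icc (-1) 1 ∧ stair (-1) * (1 - p.1 ^ 2) ≤ p.1 - p.2 * (1 - p.1 ^ 2) ∧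
    p.1 - p.2 * (1 - p.1 ^ 2) ≤ stair 1 * (1 - p.1 ^ 2)}, ?_, ?_, ?_⟩
  · simp only [ofPred_and]
    exact (isClosed_Icc.preimage continuous_fst).inter
      ((isClosed_le (by fun_prop) (by fun_prop)).inter (isClosed_le (by fun_prop) (by fun_prop)))
  · rintro ⟨x, y⟩ ⟨hx, hy⟩
    dsimp only at hx hy
    refine ⟨Ioo_subset_Icc_self hx, ?_⟩
    have := one_sub_sq_pos hx
    rcases hy with rfl | rfl <;> simp only [curve, curveLeft, sub_blowup_sub_mul hx]
    · exact ⟨by gcongr; exact stair_le_stairLeft hx.1, by gcongr; exact stairLeft_le_stair hx.2.le⟩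
    · exact ⟨by gcongr; exact stair_mono hx.1.le, by gcongr; exact stair_mono hx.2.le⟩
  · rintro ⟨x, y⟩ ⟨⟨h₁, h₂⟩, hlo, hhi⟩
    rcases h₁.lt_or_eq with h₁ | rfl
    · rcases h₂.lt_or_eq with h₂ | rfl
      · exact ⟨h₁, h₂⟩
      · norm_num at hhi
    · norm_num at hlo

lemma isClosed_barrier : IsClosed barrier := by
  obtain ⟨B, hB, hsub, hB_fst⟩ := exists_isClosed_superset_barrier
  rw [← isOpen_compl_iff, isOpen_iff_mem_nhds]
  rintro ⟨a, b⟩ hp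
  by_cases ha : a ∈ Ioo (-1) 1
  · simp only [mem_compl_iff, barrier, mem_ofPred_eq, ha, true_and, not_or] at hp
    exact eventually_notMem_barrier ha hp.1 hp.2
  · exact mem_of_superset (hB.isOpen_compl.mem_nhds fun hb => ha (hB_fst _ hb))
      (compl_subset_compl.mpr hsub)

lemma exists_lt_forall_barrier_gt {a m : ℝ} (ha : a ∈ Ioo (-1 : ℝ) 1) (hm : m < curveLeft a) :
    ∃ l < a, ∀ z ∈ barrier, z.1 ∈ Ioo l a → m < z.2 := by
  have h : ∀ᶠ u in 𝓝[<] a, m < curveLeft u ∧ m < curve u :=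
    (((tendsto_curveLeft_nhdsLE ha).mono_left (nhdsWithin_mono _ Iio_subset_Iic_self)).eventually
      (lt_mem_nhds hm)).and ((tendsto_curve_nhdsLT ha).eventually (lt_mem_nhds hm))
  obtain ⟨l, hl, hsub⟩ := mem_nhdsLT_iff_exists_Ioo_subset.mp h
  exact ⟨l, hl, fun z hz hz₁ => hz.2.elim (fun h => h ▸ (hsub hz₁).1) fun h => h ▸ (hsub hz₁).2⟩

lemma exists_gt_forall_barrier_lt {a m : ℝ} (ha : a ∈ Ioo (-1 : ℝ) 1) (hm : curve a < m) :
    ∃ r > a, ∀ z ∈ barrier, z.1 ∈ Ioo a r → z.2 < m := by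
  have h : ∀ᶠ u in 𝓝[>] a, curveLeft u < m ∧ curve u < m :=
    ((tendsto_curveLeft_nhdsGT ha).eventually (gt_mem_nhds hm)).and
      (((tendsto_curve_nhdsGE ha).mono_left (nhdsWithin_mono _ Ioi_subset_Ici_self)).eventually
        (gt_mem_nhds hm))
  obtain ⟨r, hr, hsub⟩ := mem_nhdsGT_iff_exists_Ioo_subset.mp h
  exact ⟨r, hr, fun z hz hz₁ => hz.2.elim (fun h => h ▸ (hsub hz₁).1) fun h => h ▸ (hsub hz₁).2⟩

-- `curveLeft d` is the limit from the left, so `(d, curveLeft d)` goes with the points left of `d`.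
def Straddles (d : ℝ) (p q : ℝ × ℝ) : Prop :=
  (p.1 < d ∨ p = (d, curveLeft d)) ∧ (d < q.1 ∨ q = (d, curve d))

lemma not_isPreconnected_of_straddles {t : Set (ℝ × ℝ)} (hts : t ⊆ barrier) {d : ℝ}
    (hd : d ∈ dyadics) (hd' : d ∈ Ioo (-1 : ℝ) 1) {p q : ℝ × ℝ} (hp : p ∈ t) (hq : q ∈ t)
    (hpq : Straddles d p q) : ¬ IsPreconnected t := by
  intro ht
  obtain ⟨m, hm₁, hm₂⟩ := exists_between (curve_lt_curveLeft hd)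
  obtain ⟨l, hl, hleft⟩ := exists_lt_forall_barrier_gt hd' hm₂
  obtain ⟨r, hr, hright⟩ := exists_gt_forall_barrier_lt hd' hm₁
  let U : Set (ℝ × ℝ) := {z | z.1 < d} ∪ ({z | z.1 < r} ∩ {z | m < z.2})
  let V : Set (ℝ × ℝ) := {z | d < z.1} ∪ ({z | l < z.1} ∩ {z | z.2 < m})
  have hU : IsOpen U := (isOpen_lt (by fun_prop) (by fun_prop)).union
    ((isOpen_lt (by fun_prop) (by fun_prop)).inter (isOpen_lt (by fun_prop) (by fun_prop)))
  have hV : IsOpen V := (isOpen_lt (by fun_prop) (by fun_prop)).union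
    ((isOpen_lt (by fun_prop) (by fun_prop)).inter (isOpen_lt (by fun_prop) (by fun_prop)))
  have hcover : t ⊆ U ∪ V := by
    intro z hz
    rcases lt_trichotomy z.1 d with h | h | h
    · exact Or.inl (Or.inl h)
    · rcases (hts hz).2 with h₂ | h₂ <;> rw [h] at h₂
      · exact Or.inl (Or.inr ⟨(h.trans_lt hr :), (hm₂.trans_eq h₂.symm :)⟩)
      · exact Or.inr (Or.inr ⟨(hl.trans_eq h.symm :), (h₂.trans_lt hm₁ :)⟩)
    · exact Or.inr (Or.inl h)
  have hpU : p ∈ U := hpq.1.elim (fun h => Or.inl h) fun h => Or.inr (h ▸ ⟨hr, hm₂⟩)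
  have hqV : q ∈ V := hpq.2.elim (fun h => Or.inl h) fun h => Or.inr (h ▸ ⟨hl, hm₁⟩)
  obtain ⟨z, hzt, hzU, hzV⟩ := ht U V hU hV hcover ⟨p, hp, hpU⟩ ⟨q, hq, hqV⟩
  have hz := hts hzt
  simp only [U, V, mem_union, mem_inter_iff, mem_ofPred_eq] at hzU hzV
  rcases hzU with h₁ | ⟨h₁, h₂⟩ <;> rcases hzV with h₃ | ⟨h₃, h₄⟩
  · linarith
  · linarith [hleft z hz ⟨h₃, h₁⟩]
  · linarith [hright z hz ⟨h₃, h₁⟩]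
  · linarith

lemma exists_straddles {p q : ℝ × ℝ} (hp : p ∈ barrier) (hq : q ∈ barrier) (hpq : p ≠ q) :
    ∃ d ∈ dyadics, d ∈ Ioo (-1 : ℝ) 1 ∧ (Straddles d p q ∨ Straddles d q p) := by
  rcases lt_trichotomy p.1 q.1 with h | h | h
  · obtain ⟨d, hd, hpd, hdq⟩ := dense_dyadics.exists_between h
    exact ⟨d, hd, ⟨hp.1.1.trans hpd, hdq.trans hq.1.2⟩, Or.inl ⟨Or.inl hpd, Or.inl hdq⟩⟩
  · obtain ⟨a, y⟩ := p
    obtain ⟨a', y'⟩ := q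
    obtain rfl : a = a' := h
    obtain ⟨ha, hy⟩ := hp
    obtain ⟨-, hy'⟩ := hq
    dsimp only at ha hy hy'
    have hne : y ≠ y' := fun h => hpq (h ▸ rfl)
    have hd : a ∈ dyadics := by
      by_contra hd
      simp only [curveLeft_eq_curve hd, or_self] at hy hy'
      exact hne (hy.trans hy'.symm)
    refine ⟨a, hd, ha, ?_⟩
    rcases hy with rfl | rfl <;> rcases hy' with rfl | rfl
    · exact absurd rfl hne
    · exact Or.inl ⟨Or.inr rfl, Or.inr rfl⟩
    · exact Or.inr ⟨Or.inr rfl, Or.inr rfl⟩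
    · exact absurd rfl hne
  · obtain ⟨d, hd, hqd, hdp⟩ := dense_dyadics.exists_between h
    exact ⟨d, hd, ⟨hq.1.1.trans hqd, hdp.trans hp.1.2⟩, Or.inr ⟨Or.inl hqd, Or.inl hdp⟩⟩

lemma isTotallyDisconnected_barrier : IsTotallyDisconnected barrier := by
  intro t hts ht p hp q hq
  by_contra hpq
  obtain ⟨d, hd, hd', h | h⟩ := exists_straddles (hts hp) (hts hq) hpq
  · exact not_isPreconnected_of_straddles hts hd hd' hp hq h ht
  · exact not_isPreconnected_of_straddles hts hd hd' hq hp h ht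

lemma exists_curveLeft_lt {g : ℝ → ℝ} {c : ℝ} (hg : Tendsto g (𝓝[>] (-1)) (𝓝 c)) :
    ∃ x ∈ Ioo (-1 : ℝ) 1, curveLeft x < g x :=
  ((tendsto_curveLeft_nhdsGT_neg_one.eventually (eventually_lt_atBot (c - 1))).and
    ((hg.eventually (lt_mem_nhds (sub_one_lt c))).and
      (Ioo_mem_nhdsGT (by norm_num : (-1 : ℝ) < 1)))).exists.imp
    fun _ h => ⟨h.2.2, h.1.trans h.2.1⟩

lemma exists_Ioo_subset_lt_curveLeft {g : ℝ → ℝ} {c : ℝ} (hg : Tendsto g (𝓝[<] 1) (𝓝 c)) :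
    ∃ r < 1, Ioo r 1 ⊆ {x | g x < curveLeft x} :=
  mem_nhdsLT_iff_exists_Ioo_subset.mp (((hg.eventually (gt_mem_nhds (lt_add_one c))).and
    (tendsto_curveLeft_nhdsLT_one.eventually (eventually_gt_atTop (c + 1)))).mono
      fun _ h => h.1.trans h.2)

lemma exists_mem_barrier_graph {g : ℝ → ℝ} (hg : ContinuousOn g (Icc (-1) 1)) :
    ∃ x ∈ Ioo (-1 : ℝ) 1, (x, g x) ∈ barrier := by
  let A := {x | x ∈ Ioo (-1 : ℝ) 1 ∧ curveLeft x < g x}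
  obtain ⟨x₀, hx₀A⟩ : A.Nonempty := exists_curveLeft_lt ((hg (-1) (by norm_num)).tendsto.mono_left
    (nhdsWithin_le_of_mem (Icc_mem_nhdsGT (by norm_num))))
  obtain ⟨r, hr, hrR⟩ := exists_Ioo_subset_lt_curveLeft ((hg 1 (by norm_num)).tendsto.mono_left
    (nhdsWithin_le_of_mem (Icc_mem_nhdsLT (by norm_num))))
  have hAr : ∀ x ∈ A, x ≤ r := fun x hx =>
    not_lt.mp fun hrx => lt_asymm hx.2 (hrR ⟨hrx, hx.1.2⟩)
  have hT : IsLUB A (sSup A) := isLUB_csSup ⟨x₀, hx₀A⟩ ⟨r, hAr⟩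
  set T := sSup A
  have hT₁ : T ∈ Ioo (-1 : ℝ) 1 := ⟨hx₀A.1.1.trans_le (hT.1 hx₀A), (hT.2 hAr).trans_lt hr⟩
  have hgT : Tendsto g (𝓝 T) (𝓝 (g T)) := (hg.continuousAt (Icc_mem_nhds hT₁.1 hT₁.2)).tendsto
  have hlow : curve T ≤ g T := by
    by_contra! h
    have : ∀ᶠ u in 𝓝[≤] T, g u < curveLeft u :=
      (hgT.mono_left nhdsWithin_le_nhds).eventually_lt (tendsto_curveLeft_nhdsLE hT₁)
        (h.trans_le (curve_le_curveLeft T))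
    obtain ⟨u, hu, hu'⟩ := ((hT.frequently_mem ⟨x₀, hx₀A⟩).and_eventually this).exists
    exact lt_asymm hu.2 hu'
  have hup : g T ≤ curve T := by
    refine le_of_tendsto_of_tendsto (hgT.mono_left nhdsWithin_le_nhds)
      (tendsto_curveLeft_nhdsGT hT₁) ?_
    filter_upwards [Ioo_mem_nhdsGT hT₁.2] with u hu
    exact not_lt.mp fun h => (hT.1 ⟨⟨hT₁.1.trans hu.1, hu.2⟩, h⟩).not_gt hu.1
  exact ⟨T, hT₁, hT₁, Or.inr (le_antisymm hup hlow)⟩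

lemma existsUnique_mem_barrier {x : ℝ} (hx : x ∈ Ioo (-1 : ℝ) 1) (hxd : x ∉ dyadics) :
    ∃! y : ℝ, (x, y) ∈ barrier :=
  ⟨curve x, ⟨hx, Or.inr rfl⟩, fun _ hy => hy.2.elim (·.trans (curveLeft_eq_curve hxd)) id⟩

lemma setOf_mem_barrier {x : ℝ} (hx : x ∈ Ioo (-1 : ℝ) 1) :
    {y : ℝ | (x, y) ∈ barrier} = {curveLeft x, curve x} := by
  ext y
  simp only [barrier, mem_ofPred_eq, mem_insert_iff, mem_singleton_iff, hx, true_and]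

end DyadicBarrier

open DyadicBarrier

theorem stmt_7 :
    ∃ Z : Set (ℝ × ℝ),
      IsClosed Z ∧
      (∀ p ∈ Z, p.1 ∈ Set.Ioo (-1 : ℝ) 1) ∧
      IsTotallyDisconnected Z ∧
      (∀ g : ℝ → ℝ, ContinuousOn g (Set.Icc (-1 : ℝ) 1) →
        ∃ x ∈ Set.Ioo (-1 : ℝ) 1, (x, g x) ∈ Z) ∧
      ∃ X : Set ℝ,
        X.Countable ∧ X ⊆ Set.Ioo (-1 : ℝ) 1 ∧
        Set.Ioo (-1 : ℝ) 1 ⊆ closure X ∧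
        (∀ x ∈ Set.Ioo (-1 : ℝ) 1 \ X, ∃! y : ℝ, (x, y) ∈ Z) ∧
        (∀ x ∈ X, ∃ y₁ y₂ : ℝ, y₁ ≠ y₂ ∧ {y : ℝ | (x, y) ∈ Z} = {y₁, y₂}) :=
  ⟨barrier, isClosed_barrier, fun _ hp => hp.1, isTotallyDisconnected_barrier,
    fun _ hg => exists_mem_barrier_graph hg, Ioo (-1) 1 ∩ dyadics,
    dyadics_countable.mono inter_subset_right, inter_subset_left,
    dense_dyadics.open_subset_closure_inter isOpen_Ioo,
    fun _ hx => existsUnique_mem_barrier hx.1 fun h => hx.2 ⟨hx.1, h⟩,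
    fun _ hx => ⟨_, _, (curve_lt_curveLeft hx.2).ne', setOf_mem_barrier hx.1⟩⟩
end
end

section
/- If f : ℝ → ℝ is a function whose graph intersects every closed subset B of ℝ² whose projection onto the x-axis has nonempty interior, then f is almost continuous in the sense of Stallings. -/
open Set

/-- A linear ramp from `0` (for `x ≤ u`) to `1` (for `x ≥ v`). -/
noncomputable def ramp (u v x : ℝ) : ℝ := max 0 (min 1 ((x - u) / (v - u)))

lemma ramp_continuous (u v : ℝ) : Continuous (ramp u v) := by
  unfold ramp
  exact continuous_const.max (continuous_const.min
    ((continuous_id.sub continuous_const).div_const _))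

lemma ramp_nonneg (u v x : ℝ) : 0 ≤ ramp u v x := le_max_left _ _

lemma ramp_le_one (u v x : ℝ) : ramp u v x ≤ 1 :=
  max_le zero_le_one (min_le_left _ _)

lemma ramp_eq_zero {u v x : ℝ} (huv : u < v) (hx : x ≤ u) : ramp u v x = 0 := by
  unfold ramp
  have h1 : (x - u) / (v - u) ≤ 0 :=
    div_nonpos_of_nonpos_of_nonneg (by linarith) (by linarith)
  have : min 1 ((x - u) / (v - u)) ≤ 0 := le_trans (min_le_right _ _) h1
  exact max_eq_left this

lemma ramp_eq_one {u v x : ℝ} (huv : u < v) (hx : v ≤ x) : ramp u v x = 1 := by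
  unfold ramp
  have h1 : (1 : ℝ) ≤ (x - u) / (v - u) := by
    rw [le_div_iff₀ (by linarith)]
    linarith
  rw [min_eq_left h1]
  exact max_eq_right zero_le_one

lemma interp_mem {y z r : ℝ} (h0 : 0 ≤ r) (h1 : r ≤ 1) :
    y + (z - y) * r ∈ Icc (min y z) (max y z) := by
  rcases le_total y z with h | h <;>
    constructor <;> simp [min_def, max_def, h] <;> nlinarith

section Main

variable {U : Set (ℝ × ℝ)}

/-- Channel lemma: around any point of an open set there is an open square inside it. -/
lemma channel (hU : IsOpen U) {p : ℝ × ℝ} (hp : p ∈ U) :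
    ∃ ε > 0, Ioo (p.1 - ε) (p.1 + ε) ×ˢ Ioo (p.2 - ε) (p.2 + ε) ⊆ U := by
  obtain ⟨ε, hε, hball⟩ := Metric.isOpen_iff.mp hU p hp
  refine ⟨ε, hε, ?_⟩
  rw [← Real.ball_eq_Ioo, ← Real.ball_eq_Ioo]
  calc Metric.ball p.1 ε ×ˢ Metric.ball p.2 ε = Metric.ball (p.1, p.2) ε :=
        ball_prod_same p.1 p.2 ε
    _ = Metric.ball p ε := by rw [Prod.mk.eta]
    _ ⊆ U := hball

/-- Corridor lemma: given that every closed subset of `Uᶜ` has projection with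
empty interior, inside any interval `(a,b)` there is a closed subinterval over
which the whole closed rectangle between heights `y` and `z` lies in `U`. -/
lemma corridor (hU : IsOpen U)
    (hE : ∀ B : Set (ℝ × ℝ), IsClosed B → B ⊆ Uᶜ → interior (Prod.fst '' B) = ∅)
    {a b : ℝ} (hab : a < b) (y z : ℝ) :
    ∃ u v, a < u ∧ u < v ∧ v < b ∧
      Icc u v ×ˢ Icc (min y z) (max y z) ⊆ U := by
  set B : Set (ℝ × ℝ) := Uᶜ ∩ Icc a b ×ˢ Icc (min y z) (max y z) with hB
  have hBclosed : IsClosed B :=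
    (isClosed_compl_iff.mpr hU).inter (isClosed_Icc.prod isClosed_Icc)
  have hint : interior (Prod.fst '' B) = ∅ := hE B hBclosed inter_subset_left
  set K : Set ℝ := Prod.fst '' B with hK
  have hKcomp : IsCompact K := by
    have : IsCompact B := ((isCompact_Icc.prod isCompact_Icc).inter_left
      (isClosed_compl_iff.mpr hU))
    exact this.image continuous_fst
  have hKclosed : IsClosed K := hKcomp.isClosed
  -- find a point of (a,b) not in K
  have hw : ∃ w ∈ Ioo a b, w ∉ K := by
    by_contra hcon
    push_neg at hcon
    have : Ioo a b ⊆ interior K :=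
      interior_maximal (fun w hw => hcon w hw) isOpen_Ioo
    rw [hint] at this
    exact absurd (this (show (a+b)/2 ∈ Ioo a b from
      mem_Ioo.mpr ⟨by linarith, by linarith⟩)) (notMem_empty _)
  obtain ⟨w, hwab, hwK⟩ := hw
  obtain ⟨r, hr, hball⟩ := Metric.isOpen_iff.mp hKclosed.isOpen_compl w hwK
  set r' : ℝ := min (r/2) (min ((w - a)/2) ((b - w)/2)) with hr'
  have hr'pos : 0 < r' := by
    apply lt_min (by linarith)
    apply lt_min
    · have := hwab.1; linarith
    · have := hwab.2; linarith
  refine ⟨w - r', w + r', ?_, by linarith, ?_, ?_⟩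
  · have h1 : r' ≤ (w - a)/2 := le_trans (min_le_right _ _) (min_le_left _ _)
    have := hwab.1; linarith
  · have h1 : r' ≤ (b - w)/2 := le_trans (min_le_right _ _) (min_le_right _ _)
    have := hwab.2; linarith
  · rintro ⟨x, yy⟩ ⟨hx, hy⟩
    by_contra hxy
    have hxK : x ∈ K := ⟨(x, yy), ⟨hxy, ⟨⟨?_, ?_⟩, hy⟩⟩, rfl⟩
    · have hxball : x ∈ Metric.ball w r := by
        rw [Real.ball_eq_Ioo]
        have h1 : r' ≤ r/2 := min_le_left _ _
        simp only [mem_Icc] at hx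
        constructor
        · have := hx.1; linarith
        · have := hx.2; linarith
      exact hball hxball hxK
    · -- a ≤ x
      have h1 : r' ≤ (w - a)/2 := le_trans (min_le_right _ _) (min_le_left _ _)
      simp only [mem_Icc] at hx
      have := hwab.1; have := hx.1; linarith
    · have h1 : r' ≤ (b - w)/2 := le_trans (min_le_right _ _) (min_le_right _ _)
      simp only [mem_Icc] at hx
      have := hwab.2; have := hx.2; linarith

/-- Extension step: a function that is constant `y` past `t` and safe on `[a,t]`,
with a channel at `(t,y)`, can be modified (after `t`) to become constant `ys`
past `t'` and safe on `[a,t']`, given a channel at `(s,ys)` with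
`s - εs < t ≤ s ≤ t' ≤ s + εs/2`. -/
lemma extend (hU : IsOpen U)
    (hE : ∀ B : Set (ℝ × ℝ), IsClosed B → B ⊆ Uᶜ → interior (Prod.fst '' B) = ∅)
    {a fa t y εt s ys εs t' : ℝ} {g : ℝ → ℝ}
    (hg : Continuous g) (hga : ∀ x ≤ a, g x = fa) (hgt : ∀ x, t ≤ x → g x = y)
    (hsafe : ∀ x ∈ Icc a t, (x, g x) ∈ U)
    (hchan : Ioo (t - εt) (t + εt) ×ˢ Ioo (y - εt) (y + εt) ⊆ U)
    (hεt : 0 < εt) (hεs : 0 < εs)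
    (hchs : Ioo (s - εs) (s + εs) ×ˢ Ioo (ys - εs) (ys + εs) ⊆ U)
    (hst : s - εs < t) (hts : t ≤ s) (ht'1 : s ≤ t') (ht'2 : t' ≤ s + εs/2)
    (htt' : t < t') (hat : a ≤ t) :
    ∃ g' : ℝ → ℝ, Continuous g' ∧ (∀ x ≤ a, g' x = fa) ∧
      (∀ x, t' ≤ x → g' x = ys) ∧ (∀ x ∈ Icc a t', (x, g' x) ∈ U) ∧
      Ioo (t' - εs/2) (t' + εs/2) ×ˢ Ioo (ys - εs/2) (ys + εs/2) ⊆ U := by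
  have hm : t < min (t + εt) t' := lt_min (by linarith) htt'
  obtain ⟨u, v, hu, huv, hv, hcor⟩ := corridor hU hE hm y ys
  have hvt' : v < t' := lt_of_lt_of_le hv (min_le_right _ _)
  have hvte : v < t + εt := lt_of_lt_of_le hv (min_le_left _ _)
  refine ⟨fun x => g x + (ys - y) * ramp u v x, ?_, ?_, ?_, ?_, ?_⟩
  · exact hg.add (continuous_const.mul (ramp_continuous u v))
  · intro x hx
    show g x + (ys - y) * ramp u v x = fa
    rw [ramp_eq_zero huv (by linarith), mul_zero, add_zero]
    exact hga x hx
  · intro x hx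
    show g x + (ys - y) * ramp u v x = ys
    rw [hgt x (by linarith), ramp_eq_one huv (by linarith)]
    ring
  · intro x hx
    obtain ⟨hx1, hx2⟩ := hx
    show (x, g x + (ys - y) * ramp u v x) ∈ U
    rcases le_or_gt x u with hxu | hxu
    · rw [ramp_eq_zero huv hxu, mul_zero, add_zero]
      rcases le_or_gt x t with hxt | hxt
      · exact hsafe x ⟨hx1, hxt⟩
      · rw [hgt x hxt.le]
        apply hchan
        constructor
        · constructor <;> simp only [] <;> [linarith; linarith]
        · constructor <;> simp only [] <;> linarith
    · rcases le_or_gt v x with hvx | hvx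
      · rw [hgt x (by linarith), ramp_eq_one huv hvx]
        have : y + (ys - y) * 1 = ys := by ring
        rw [this]
        apply hchs
        constructor
        · constructor <;> simp only [] <;> [linarith; linarith]
        · constructor <;> simp only [] <;> linarith
      · rw [hgt x (by linarith)]
        apply hcor
        refine ⟨⟨hxu.le, hvx.le⟩, ?_⟩
        exact interp_mem (ramp_nonneg u v x) (ramp_le_one u v x)
  · intro p hp
    apply hchs
    obtain ⟨hp1, hp2⟩ := hp
    simp only [mem_prod, mem_Ioo] at *
    constructor
    · constructor <;> [linarith [hp1.1]; linarith [hp1.2]]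
    · constructor <;> [linarith [hp2.1]; linarith [hp2.2]]

/-- Main interval lemma: there is a continuous function equal to `f a` before `a`,
equal to `f b` after `b`, whose graph over `[a,b]` lies in `U`. -/
lemma good {f : ℝ → ℝ} (hU : IsOpen U) (hf : ∀ x : ℝ, (x, f x) ∈ U)
    (hE : ∀ B : Set (ℝ × ℝ), IsClosed B → B ⊆ Uᶜ → interior (Prod.fst '' B) = ∅)
    {a b : ℝ} (hab : a < b) :
    ∃ g : ℝ → ℝ, Continuous g ∧ (∀ x ≤ a, g x = f a) ∧
      (∀ x, b ≤ x → g x = f b) ∧ ∀ x ∈ Icc a b, (x, g x) ∈ U := by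
  obtain ⟨εa, hεa, hcha⟩ := channel hU (hf a)
  set T : Set ℝ := {t | a < t ∧ t < b ∧ ∃ g y ε, 0 < ε ∧ Continuous g ∧
    (∀ x ≤ a, g x = f a) ∧ (∀ x, t ≤ x → g x = y) ∧ (∀ x ∈ Icc a t, (x, g x) ∈ U) ∧
    Ioo (t - ε) (t + ε) ×ˢ Ioo (y - ε) (y + ε) ⊆ U} with hT
  set t₀ : ℝ := min (a + εa/2) ((a+b)/2) with ht₀def
  have ht₀a : a < t₀ := lt_min (by linarith) (by linarith)
  have ht₀1 : t₀ ≤ a + εa/2 := min_le_left _ _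
  have ht₀b : t₀ < b := lt_of_le_of_lt (min_le_right _ _) (by linarith)
  have ht₀ : t₀ ∈ T := by
    refine ⟨ht₀a, ht₀b, fun _ => f a, f a, εa/2, by linarith, continuous_const,
      fun x _ => rfl, fun x _ => rfl, ?_, ?_⟩
    · intro x hx
      apply hcha
      exact ⟨⟨by linarith [hx.1], by linarith [hx.2]⟩, ⟨by linarith, by linarith⟩⟩
    · intro p hp
      apply hcha
      obtain ⟨hp1, hp2⟩ := hp
      simp only [mem_Ioo] at *
      exact ⟨⟨by linarith [hp1.1], by linarith [hp1.2]⟩,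
        ⟨by linarith [hp2.1], by linarith [hp2.2]⟩⟩
  have hbdd : BddAbove T := ⟨b, fun t ht => ht.2.1.le⟩
  have hne : T.Nonempty := ⟨t₀, ht₀⟩
  set s := sSup T with hs
  have hsb : s ≤ b := csSup_le hne (fun t ht => ht.2.1.le)
  have has : a < s := lt_of_lt_of_le ht₀a (le_csSup hbdd ht₀)
  have hseq : s = b := by
    by_contra hne'
    have hslt : s < b := lt_of_le_of_ne hsb hne'
    obtain ⟨εs, hεs, hchs⟩ := channel hU (hf s)
    obtain ⟨t, htT, hts'⟩ := exists_lt_of_lt_csSup hne (show s - εs < s by linarith)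
    have htle : t ≤ s := le_csSup hbdd htT
    obtain ⟨hat, htb, g, y, εt, hεt, hg, hga, hgt, hsafe, hchan⟩ := htT
    set t' : ℝ := min (s + εs/2) ((s+b)/2) with ht'def
    have h1 : s < t' := lt_min (by linarith) (by linarith)
    have h2 : t' ≤ s + εs/2 := min_le_left _ _
    have h3 : t' < b := lt_of_le_of_lt (min_le_right _ _) (by linarith)
    obtain ⟨g', hg', hga', hgt', hsafe', hchan'⟩ :=
      extend hU hE hg hga hgt hsafe hchan hεt hεs hchs hts' htle h1.le h2
        (lt_of_le_of_lt htle h1) hat.le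
    have ht'T : t' ∈ T := ⟨lt_trans has h1, h3, g', f s, εs/2, by linarith,
      hg', hga', hgt', hsafe', hchan'⟩
    exact absurd (le_csSup hbdd ht'T) (not_le.mpr h1)
  obtain ⟨εb, hεb, hchb⟩ := channel hU (hf b)
  obtain ⟨t, htT, htb'⟩ := exists_lt_of_lt_csSup hne
    (show b - εb < s by rw [hseq]; linarith)
  obtain ⟨hat, htb, g, y, εt, hεt, hg, hga, hgt, hsafe, hchan⟩ := htT
  obtain ⟨g', hg', hga', hgt', hsafe', _⟩ :=
    extend hU hE hg hga hgt hsafe hchan hεt hεb hchb htb' htb.le le_rfl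
      (by linarith) htb hat.le
  exact ⟨g', hg', hga', hgt', hsafe'⟩

end Main

/-- `f` is almost continuous in the sense of Stallings. -/
def AlmostContinuous (f : ℝ → ℝ) : Prop :=
  ∀ U : Set (ℝ × ℝ), IsOpen U → {p : ℝ × ℝ | p.2 = f p.1} ⊆ U →
    ∃ g : ℝ → ℝ, Continuous g ∧ {p : ℝ × ℝ | p.2 = g p.1} ⊆ U

theorem stmt_8 (f : ℝ → ℝ)
    (h : ∀ B : Set (ℝ × ℝ), IsClosed B →
      (interior (Prod.fst '' B)).Nonempty → ∃ x : ℝ, (x, f x) ∈ B) :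
    AlmostContinuous f := by
  intro U hU hgr
  have hf : ∀ x : ℝ, (x, f x) ∈ U := fun x => hgr rfl
  have hE : ∀ B : Set (ℝ × ℝ), IsClosed B → B ⊆ Uᶜ →
      interior (Prod.fst '' B) = ∅ := by
    intro B hB hBU
    by_contra hne
    obtain ⟨x, hx⟩ := h B hB (nonempty_iff_ne_empty.mpr hne)
    exact hBU hx (hf x)
  choose G hGc hGa hGb hGsafe using
    fun n : ℤ => good hU hf hE (show (n : ℝ) < (n : ℝ) + 1 by linarith)
  refine ⟨fun x => G ⌊x⌋ x, ?_, ?_⟩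
  · rw [continuous_iff_continuousAt]
    intro x
    rcases lt_or_eq_of_le (Int.floor_le x) with hx | hx
    · -- x is not an integer: locally equal to G ⌊x⌋
      apply (hGc ⌊x⌋).continuousAt.congr
      filter_upwards [Ioo_mem_nhds hx (Int.lt_floor_add_one x)] with z hz
      have : ⌊z⌋ = ⌊x⌋ := by
        rw [Int.floor_eq_iff]
        exact ⟨hz.1.le, by push_cast; exact hz.2⟩
      simp only [this]
    · -- x = ⌊x⌋ is an integer
      set n : ℤ := ⌊x⌋ with hn
      have hxn : G n x = f ((n : ℝ)) := hGa n x hx.ge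
      have hxn' : G (n - 1) x = f ((n : ℝ)) := by
        have h1 : ((n - 1 : ℤ) : ℝ) + 1 ≤ x := by push_cast; linarith [hx.le]
        have := hGb (n - 1) x h1
        rw [this]
        norm_num
      have cw1 : ContinuousWithinAt (fun z => G ⌊z⌋ z) (Ioc (x - 1) x) x := by
        apply ((hGc (n - 1)).continuousWithinAt).congr
        · intro z hz
          rcases eq_or_lt_of_le hz.2 with hzx | hzx
          · rw [hzx]
            show G n x = G (n-1) x
            rw [hxn, hxn']
          · have : ⌊z⌋ = n - 1 := by
              rw [Int.floor_eq_iff]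
              constructor
              · push_cast
                linarith [hz.1, hx.le]
              · push_cast
                linarith [hx.ge]
            simp only [this]
        · show G n x = G (n-1) x
          rw [hxn, hxn']
      have cw2 : ContinuousWithinAt (fun z => G ⌊z⌋ z) (Ico x (x + 1)) x := by
        apply ((hGc n).continuousWithinAt).congr
        · intro z hz
          have : ⌊z⌋ = n := by
            rw [Int.floor_eq_iff]
            constructor
            · rw [hx]; exact hz.1
            · push_cast
              rw [hx]
              exact hz.2
          simp only [this]
        · rfl
      apply (cw1.union cw2).continuousAt
      rw [mem_nhds_iff]
      refine ⟨Ioo (x - 1) (x + 1), ?_, isOpen_Ioo, ⟨by linarith, by linarith⟩⟩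
      intro z hz
      rcases le_or_gt z x with h' | h'
      · exact Or.inl ⟨hz.1, h'⟩
      · exact Or.inr ⟨h'.le, hz.2⟩
  · intro p hp
    have hp' : p.2 = G ⌊p.1⌋ p.1 := hp
    have : p = (p.1, G ⌊p.1⌋ p.1) := by
      rw [← hp']
    rw [this]
    exact hGsafe ⌊p.1⌋ p.1 ⟨Int.floor_le p.1, (Int.lt_floor_add_one p.1).le⟩
end

section
/- Let g be a ℚ-additive function from a ℚ-linear subspace E of ℝ into ℝ with x ∉ E, and let Z ⊆ ℝ² satisfy Z ∩ graph(g) = ∅. Then the graph of the ℚ-linear extension of g determined by additionally setting value y at x is disjoint from Z if and only if (x,y) ∉ ⋃ { q·Z + (p, g(p)) : p ∈ E, q ∈ ℚ }. -/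
/-!
For `q ≠ 0`, `f p + q • w ∈ Z` iff `w ∈ q⁻¹ • Z + f (-q⁻¹ • p)`, so the involution
`(p, q) ↦ (-q⁻¹ • p, q⁻¹)` matches the two conditions. The case `q = 0` is excluded on the left
by `Z ∩ range f = ∅` and on the right by `w ∉ range f`.
-/

section
variable {K M V : Type*} [Field K] [AddCommGroup M] [Module K M] [AddCommGroup V] [Module K V]

theorem forall_add_smul_notMem_iff_notMem_iUnion_image (f : M →ₗ[K] V) {w : V} {Z : Set V}
    (hw : ∀ p, f p ≠ w) (hZ : ∀ p, f p ∉ Z) :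
    (∀ (p : M) (q : K), f p + q • w ∉ Z) ↔
      w ∉ ⋃ (p : M) (q : K), (fun z => q • z + f p) '' Z := by
  simp only [Set.mem_iUnion, Set.mem_image, ← not_exists]
  refine not_iff_not.mpr ?_
  constructor
  · rintro ⟨p, q, hmem⟩
    have hq : q ≠ 0 := by rintro rfl; exact hZ p (by simpa using hmem)
    refine ⟨-q⁻¹ • p, q⁻¹, _, hmem, ?_⟩
    rw [smul_add, smul_smul, inv_mul_cancel₀ hq, one_smul, map_smul, neg_smul]
    abel
  · rintro ⟨p, q, z, hz, rfl⟩
    have hq : q ≠ 0 := by rintro rfl; exact hw p (by simp)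
    refine ⟨-q⁻¹ • p, q⁻¹, ?_⟩
    rw [smul_add, smul_smul, inv_mul_cancel₀ hq, one_smul, map_smul, neg_smul]
    convert hz using 1
    abel

end

theorem stmt_10 (E : Submodule ℚ ℝ) (g : E →ₗ[ℚ] ℝ) (x y : ℝ) (hx : x ∉ E)
    (Z : Set (ℝ × ℝ))
    (hdisj : ∀ p : E, ((p : ℝ), g p) ∉ Z) :
    (∀ p : E, ∀ q : ℚ, ((p : ℝ) + (q : ℝ) * x, g p + (q : ℝ) * y) ∉ Z) ↔
      (x, y) ∉ ⋃ (p : E) (q : ℚ),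
        (fun z : ℝ × ℝ => (q : ℝ) • z + ((p : ℝ), g p)) '' Z := by
  have hxy : ∀ p : E, ((p : ℝ), g p) ≠ (x, y) := fun p h =>
    hx ((Prod.mk.inj h).1 ▸ p.2)
  have key := forall_add_smul_notMem_iff_notMem_iUnion_image (E.subtype.prod g) hxy hdisj
  simp only [← Rat.cast_smul_eq_qsmul ℝ] at key
  exact key
end

section
/- Suppose f : ℝ → ℝ is additive, f restricted to some perfect set P ⊆ ℝ is continuous, and for every nowhere dense set M ⊆ ℝ the image f[M] is a proper subset of ℝ. Then there exists a closed set F ⊆ ℝ² whose projection onto the x-axis is all of ℝ and which is disjoint from the graph of f. (In particular f is not almost continuous.) -/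
/-!
Only a nowhere dense (not a null) compact `Q` with `[0,1] ⊆ K + Q` for some compact `K ⊆ P` is
needed, and it can be built directly. A Cantor scheme inside `P`, splitting every node into a left
and a right perfect part, gives a strictly antitone `e : Lex (ℕ → Fin 2) → P` whose range has a gap
between any two of its points. With `g` the binary-digit map onto `[0,1]`, `g - e` still has such
gaps because `g` is monotone, so `Q = closure (range (g - e))` is nowhere dense, and
`g = e + (g - e)` gives `[0,1] ⊆ K + Q`. For `c ∉ f '' Q` the closed set
`{(p + q, f p + c) | p ∈ K, q ∈ Q} + {(k, f k) | k ∈ ℤ}` projects onto `ℝ`, and by additivity it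
meets the graph of `f` only if `f q = c` for some `q ∈ Q`.
-/

open Set Pointwise

def HasGaps (A : Set ℝ) : Prop :=
  ∀ a ∈ A, ∀ b ∈ A, a < b → ∃ c d, a ≤ c ∧ c < d ∧ d ≤ b ∧ Disjoint A (Ioo c d)

theorem HasGaps.isNowhereDense {A : Set ℝ} (hA : HasGaps A) : IsNowhereDense A := by
  have meets : ∀ {α β}, α < β → Ioo α β ⊆ closure A → (A ∩ Ioo α β).Nonempty :=
    fun hαβ hsub => (closure_inter_open_nonempty_iff isOpen_Ioo).1 <| by
      rwa [inter_eq_right.2 hsub, nonempty_Ioo]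
  rw [IsNowhereDense, eq_empty_iff_forall_notMem]
  intro z hz
  obtain ⟨α, β, ⟨hαz, hzβ⟩, hsub⟩ :=
    mem_nhds_iff_exists_Ioo_subset.1 (isOpen_interior.mem_nhds hz)
  replace hsub := hsub.trans interior_subset
  obtain ⟨a, haA, hαa, haβ⟩ := meets (hαz.trans hzβ) hsub
  obtain ⟨b, hbA, hab, hbβ⟩ := meets haβ ((Ioo_subset_Ioo_left hαa.le).trans hsub)
  obtain ⟨c, d, hac, hcd, hdb, hdisj⟩ := hA a haA b hbA hab
  obtain ⟨w, hwA, hw⟩ :=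
    meets hcd ((Ioo_subset_Ioo (hαa.trans_le hac).le (hdb.trans hbβ.le)).trans hsub)
  exact hdisj.ne_of_mem hwA hw rfl

theorem hasGaps_range_sub {X : Type*} [LinearOrder X] {g e : X → ℝ} (hg : Monotone g)
    (he : StrictAnti e) (hgap : HasGaps (range e)) : HasGaps (range (g - e)) := by
  rintro _ ⟨x₁, rfl⟩ _ ⟨x₂, rfl⟩ hlt
  have hx : x₁ < x₂ := by
    by_contra! h
    exact hlt.not_ge (sub_le_sub (hg h) (he.antitone h))
  obtain ⟨y₁, y₂, h₁, hy, h₂, hdisj⟩ := hgap _ ⟨x₂, rfl⟩ _ ⟨x₁, rfl⟩ (he hx)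
  have hsplit : ∀ x, y₂ ≤ e x ∨ e x ≤ y₁ := fun x => by
    by_contra! h
    exact hdisj.ne_of_mem ⟨x, rfl⟩ ⟨h.2, h.1⟩ rfl
  have hcut : ∀ x x', y₂ ≤ e x → e x' ≤ y₁ → g x ≤ g x' := fun x x' hx hx' =>
    hg <| le_of_not_gt fun h => by linarith [he.antitone h.le]
  -- a cut `τ` between `{x | y₂ ≤ e x}` and `{x | e x ≤ y₁}` turns the gap `(y₁, y₂)` of `e`
  -- into the gap `(τ - y₂, τ - y₁)` of `g - e`
  set τ := ⨆ x : {x // y₂ ≤ e x}, g x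
  have hne : Nonempty {x // y₂ ≤ e x} := ⟨⟨x₁, h₂⟩⟩
  have hL : ∀ x, y₂ ≤ e x → g x ≤ τ := fun x hx =>
    le_ciSup (f := fun x : {x // y₂ ≤ e x} => g x) ⟨g x₂, by
      rintro _ ⟨x', rfl⟩; exact hcut _ _ x'.2 h₁⟩ ⟨x, hx⟩
  have hU : ∀ x, e x ≤ y₁ → τ ≤ g x := fun x hx => ciSup_le fun x' => hcut _ _ x'.2 hx
  refine ⟨τ - y₂, τ - y₁, ?_, by linarith, ?_, ?_⟩
  · linarith [hL x₁ h₂, Pi.sub_apply g e x₁]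
  · linarith [hU x₂ h₁, Pi.sub_apply g e x₂]
  rw [disjoint_left]
  rintro _ ⟨x, rfl⟩ ⟨hlo, hhi⟩
  rw [Pi.sub_apply] at hlo hhi
  rcases hsplit x with h | h
  · linarith [hL x h]
  · linarith [hU x h]

theorem Real.monotone_ofDigits_lex {b : ℕ} :
    Monotone fun x : Lex (ℕ → Fin b) => Real.ofDigits (ofLex x) := by
  intro x y hxy
  rcases hxy.lt_or_eq with ⟨n, hagree, hn⟩ | rfl
  · have hsum : ∑ i ∈ Finset.range n, ofDigitsTerm (ofLex x) i =
        ∑ i ∈ Finset.range n, ofDigitsTerm (ofLex y) i :=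
      Finset.sum_congr rfl fun i hi => by simp [ofDigitsTerm, hagree i (Finset.mem_range.1 hi)]
    have hdigit : ((ofLex x n : ℕ) : ℝ) + 1 ≤ (ofLex y n : ℕ) := by exact_mod_cast hn
    beta_reduce
    rw [ofDigits_eq_sum_add_ofDigits (ofLex x) (n + 1),
      ofDigits_eq_sum_add_ofDigits (ofLex y) (n + 1), Finset.sum_range_succ,
      Finset.sum_range_succ, hsum]
    have hpos : (0 : ℝ) ≤ ((b : ℝ) ^ (n + 1))⁻¹ := by positivity
    have htx := mul_le_mul_of_nonneg_left (ofDigits_le_one fun i => ofLex x (i + (n + 1))) hpos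
    have hty := mul_nonneg hpos (ofDigits_nonneg fun i => ofLex y (i + (n + 1)))
    have hd := mul_le_mul_of_nonneg_right hdigit hpos
    simp only [ofDigitsTerm]
    linarith
  · exact le_rfl

theorem Pi.Lex.eq_of_le_of_le {α : Type*} [LinearOrder α] {x y z : Lex (ℕ → α)} {n : ℕ}
    (hxz : x ≤ z) (hzy : z ≤ y) (hxy : ∀ m < n, x m = y m) : ∀ m < n, z m = x m := by
  intro m
  induction m using Nat.strong_induction_on with
  | _ m ih =>
    intro hm
    have hz : ∀ j < m, z j = x j := fun j hj => ih j hj (hj.trans hm)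
    refine le_antisymm ?_ (Pi.apply_le_of_toLex hxz fun j hj => (hz j hj).symm)
    rw [hxy m hm]
    exact Pi.apply_le_of_toLex hzy fun j hj => (hz j hj).trans (hxy j (hj.trans hm))

theorem Perfect.exists_nonempty_perfect_subset_Icc {C : Set ℝ} (hC : Perfect C) {x : ℝ}
    (hx : x ∈ C) {r : ℝ} (hr : 0 < r) :
    ∃ D ⊆ C ∩ Icc (x - r) (x + r), Perfect D ∧ D.Nonempty := by
  refine ⟨closure (Metric.ball x r ∩ C), subset_inter ?_ ?_,
    hC.closure_nhds_inter x hx (Metric.mem_ball_self hr) Metric.isOpen_ball⟩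
  · exact closure_minimal inter_subset_right hC.closed
  · rw [← Real.closedBall_eq_Icc]
    exact (closure_mono inter_subset_left).trans Metric.closure_ball_subset_closedBall

abbrev NonemptyPerfect : Type := {C : Set ℝ // Perfect C ∧ C.Nonempty}

namespace NonemptyPerfect

theorem exists_split (C : NonemptyPerfect) :
    ∃ D : Fin 2 → NonemptyPerfect, (∀ i, (D i).1 ⊆ C.1) ∧
      ∃ v u, v < u ∧ (D 1).1 ⊆ Iic v ∧ (D 0).1 ⊆ Ici u := by
  obtain ⟨hC, x, hx⟩ := C.2
  obtain ⟨y, ⟨-, hy⟩, hyx⟩ := accPt_iff_nhds.1 (hC.acc x hx) univ Filter.univ_mem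
  obtain ⟨a, ha, b, hb, hab⟩ : ∃ a ∈ C.1, ∃ b ∈ C.1, a < b := by
    rcases hyx.lt_or_gt with h | h
    exacts [⟨y, hy, x, hx, h⟩, ⟨x, hx, y, hy, h⟩]
  obtain ⟨δ, hδ, hδab⟩ : ∃ δ > 0, a + δ < b - δ := ⟨(b - a) / 3, by linarith, by linarith⟩
  obtain ⟨D₁, hD₁, hD₁p, hD₁ne⟩ := hC.exists_nonempty_perfect_subset_Icc ha hδ
  obtain ⟨D₀, hD₀, hD₀p, hD₀ne⟩ := hC.exists_nonempty_perfect_subset_Icc hb hδ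
  refine ⟨![⟨D₀, hD₀p, hD₀ne⟩, ⟨D₁, hD₁p, hD₁ne⟩], ?_, a + δ, b - δ, hδab, ?_, ?_⟩
  · intro i
    fin_cases i
    exacts [hD₀.trans inter_subset_left, hD₁.trans inter_subset_left]
  · exact fun p hp => (hD₁ hp).2.2
  · exact fun p hp => (hD₀ hp).2.1

noncomputable def split (C : NonemptyPerfect) : Fin 2 → NonemptyPerfect :=
  C.exists_split.choose

theorem split_subset (C : NonemptyPerfect) (i : Fin 2) : (C.split i).1 ⊆ C.1 :=
  C.exists_split.choose_spec.1 i

theorem exists_split_gap (C : NonemptyPerfect) :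
    ∃ v u, v < u ∧ (C.split 1).1 ⊆ Iic v ∧ (C.split 0).1 ⊆ Ici u :=
  C.exists_split.choose_spec.2

noncomputable def node (C : NonemptyPerfect) (x : ℕ → Fin 2) : ℕ → NonemptyPerfect
  | 0 => C
  | n + 1 => (C.node x n).split (x n)

theorem node_congr (C : NonemptyPerfect) {x y : ℕ → Fin 2} {n : ℕ} (h : ∀ m < n, x m = y m) :
    C.node x n = C.node y n := by
  induction n with
  | zero => rfl
  | succ n ih =>
    simp only [node, h n n.lt_succ_self, ih fun m hm => h m (hm.trans n.lt_succ_self)]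

theorem nonempty_iInter_node (C : NonemptyPerfect) (hC : IsCompact C.1) (x : ℕ → Fin 2) :
    (⋂ n, (C.node x n).1).Nonempty :=
  IsCompact.nonempty_iInter_of_sequence_nonempty_isCompact_isClosed _
    (fun _ => split_subset _ _) (fun n => (C.node x n).2.2) hC (fun n => (C.node x n).2.1.closed)

end NonemptyPerfect

theorem Perfect.exists_strictAnti_hasGaps {K : Set ℝ} (hK : Perfect K) (hne : K.Nonempty)
    (hKc : IsCompact K) :
    ∃ e : Lex (ℕ → Fin 2) → ℝ, StrictAnti e ∧ range e ⊆ K ∧ HasGaps (range e) := by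
  set C : NonemptyPerfect := ⟨K, hK, hne⟩
  choose e he using fun x : Lex (ℕ → Fin 2) => C.nonempty_iInter_node hKc (ofLex x)
  have hmem : ∀ x n, e x ∈ (C.node (ofLex x) n).1 := fun x => mem_iInter.1 (he x)
  -- two sequences first differing at `n` are sent to either side of the gap of their common node
  have hsep : ∀ x y : Lex (ℕ → Fin 2), ∀ n, (∀ m < n, x m = y m) → x n < y n →
      ∃ v u, v < u ∧ e y ≤ v ∧ u ≤ e x ∧
        ∀ z : Lex (ℕ → Fin 2), (∀ m < n, z m = x m) → e z ∉ Ioo v u := by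
    intro x y n hxy hn
    obtain ⟨v, u, hvu, h₁, h₀⟩ := (C.node (ofLex x) n).exists_split_gap
    have hx0 : x n = 0 := by omega
    have hy1 : y n = 1 := by omega
    have hnode : ∀ z : Lex (ℕ → Fin 2), (∀ m < n, z m = x m) →
        e z ∈ ((C.node (ofLex x) n).split (z n)).1 :=
      fun z hz => C.node_congr hz ▸ hmem z (n + 1)
    refine ⟨v, u, hvu, h₁ ?_, h₀ ?_, fun z hz hzI => ?_⟩
    · simpa [hy1] using hnode y fun m hm => (hxy m hm).symm
    · simpa [hx0] using hnode x fun _ _ => rfl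
    · rcases Fin.exists_fin_two.1 ⟨z n, rfl⟩ with h | h
      · exact hzI.2.not_ge (h₀ (h ▸ hnode z hz))
      · exact hzI.1.not_ge (h₁ (h ▸ hnode z hz))
  have hanti : StrictAnti e := by
    rintro x y ⟨n, hxy, hn⟩
    obtain ⟨v, u, hvu, hy, hx, -⟩ := hsep x y n hxy hn
    linarith
  refine ⟨e, hanti, range_subset_iff.2 fun x => hmem x 0, ?_⟩
  rintro _ ⟨y, rfl⟩ _ ⟨x, rfl⟩ hlt
  obtain ⟨n, hxy, hn⟩ := hanti.lt_iff_gt.1 hlt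
  obtain ⟨v, u, hvu, hy, hx, hgap⟩ := hsep x y n hxy hn
  refine ⟨v, u, hy, hvu, hx, disjoint_left.2 ?_⟩
  rintro _ ⟨z, rfl⟩ hz
  refine hgap z (Pi.Lex.eq_of_le_of_le ?_ ?_ hxy) hz
  · exact (hanti.lt_iff_gt.1 (hz.2.trans_le hx)).le
  · exact (hanti.lt_iff_gt.1 (hy.trans_lt hz.1)).le

theorem Perfect.exists_isCompact_isNowhereDense_Icc_subset_add {P : Set ℝ} (hP : Perfect P)
    (hne : P.Nonempty) :
    ∃ K ⊆ P, IsCompact K ∧ ∃ Q : Set ℝ, IsCompact Q ∧ IsNowhereDense Q ∧ Icc 0 1 ⊆ K + Q := by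
  obtain ⟨x, hx⟩ := hne
  obtain ⟨K, hKsub, hK, hKne⟩ := hP.exists_nonempty_perfect_subset_Icc hx one_pos
  have hKc : IsCompact K :=
    isCompact_Icc.of_isClosed_subset hK.closed (hKsub.trans inter_subset_right)
  obtain ⟨e, he, heK, hgap⟩ := hK.exists_strictAnti_hasGaps hKne hKc
  set g : Lex (ℕ → Fin 2) → ℝ := fun x => Real.ofDigits (ofLex x)
  have hrange : range (g - e) ⊆ Icc 0 1 - K := by
    rintro _ ⟨x, rfl⟩
    exact ⟨g x, ⟨Real.ofDigits_nonneg _, Real.ofDigits_le_one _⟩, e x, heK ⟨x, rfl⟩, rfl⟩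
  refine ⟨K, hKsub.trans inter_subset_left, hKc, closure (range (g - e)), ?_,
    (hasGaps_range_sub Real.monotone_ofDigits_lex he hgap).isNowhereDense.closure, ?_⟩
  · exact ((isBounded_sub (Metric.isBounded_Icc 0 1) hKc.isBounded).subset
      hrange).isCompact_closure
  · intro t ht
    obtain ⟨x, -, rfl⟩ := Real.ofDigits_SurjOn one_lt_two ht
    exact ⟨e (toLex x), heK ⟨_, rfl⟩, g (toLex x) - e (toLex x), subset_closure ⟨_, rfl⟩,
      add_sub_cancel _ _⟩

theorem exists_isClosed_fst_image_eq_univ_forall_notMem (f : ℝ →+ ℝ) {K Q : Set ℝ}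
    (hK : IsCompact K) (hQ : IsCompact Q) (hf : ContinuousOn f K) (hKQ : Icc 0 1 ⊆ K + Q)
    {c : ℝ} (hc : c ∉ f '' Q) :
    ∃ F : Set (ℝ × ℝ), IsClosed F ∧ Prod.fst '' F = univ ∧ ∀ x, (x, f x) ∉ F := by
  set F₀ := (fun pq : ℝ × ℝ => (pq.1 + pq.2, f pq.1 + c)) '' (K ×ˢ Q)
  set G := range fun k : ℤ => ((k : ℝ), f k)
  have hF₀ : IsCompact F₀ :=
    (hK.prod hQ).image_of_continuousOn <| (continuous_fst.add continuous_snd).continuousOn.prodMk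
      ((hf.comp continuousOn_fst fun _ h => h.1).add continuousOn_const)
  have hG : IsClosed G := (Metric.isClosedEmbedding_of_pairwise_le_dist one_pos fun k l hkl =>
    (Int.pairwise_one_le_dist hkl).trans_eq (Int.dist_cast_real k l).symm |>.trans
      (le_max_left _ _)).isClosed_range
  refine ⟨F₀ + G, hG.add_left_of_isCompact hF₀, eq_univ_of_forall fun x => ?_, ?_⟩
  · obtain ⟨p, hp, q, hq, hpq⟩ := hKQ ⟨Int.fract_nonneg x, (Int.fract_lt_one x).le⟩
    refine ⟨_, ⟨_, ⟨(p, q), ⟨hp, hq⟩, rfl⟩, _, ⟨⌊x⌋, rfl⟩, rfl⟩, ?_⟩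
    simp [hpq]
  · rintro x ⟨_, ⟨⟨p, q⟩, ⟨hp, hq⟩, rfl⟩, _, ⟨k, rfl⟩, hx⟩
    simp only [Prod.mk_add_mk, Prod.mk.injEq] at hx
    refine hc ⟨q, hq, ?_⟩
    have : f x = f p + f q + f k := by rw [← hx.1, map_add, map_add]
    linarith [hx.2]

theorem stmt_19 (f : ℝ → ℝ) (hadd : ∀ x y : ℝ, f (x + y) = f x + f y)
    (P : Set ℝ) (hP : Perfect P) (hPne : P.Nonempty) (hcont : ContinuousOn f P)
    (himg : ∀ M : Set ℝ, IsNowhereDense M → f '' M ≠ Set.univ) :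
    ∃ F : Set (ℝ × ℝ), IsClosed F ∧ Prod.fst '' F = Set.univ ∧
      ∀ x : ℝ, (x, f x) ∉ F := by
  obtain ⟨K, hKP, hK, Q, hQ, hQnd, hKQ⟩ := hP.exists_isCompact_isNowhereDense_Icc_subset_add hPne
  obtain ⟨c, hc⟩ := (ne_univ_iff_exists_notMem _).1 (himg Q hQnd)
  exact exists_isClosed_fst_image_eq_univ_forall_notMem (AddMonoidHom.mk' f hadd) hK hQ
    (hcont.mono hKP) hKQ hc
end
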